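/- arXiv:2110.01753 — 9 statements merged into one kernel-verified Lean document; each statement's English description precedes it below -/
import Mathlib

section
/- Let a ∈ k be nonzero and let δ be the k-derivation x(x+a)·∂/∂x + ay·∂/∂y of k[x,y]. Then the kernel of δ equals the k-subalgebra of k[x,y] generated by x², y² and x²y + axy. -/
open MvPolynomial

/-!
Over a ring of characteristic 2, every derivation kills squares, so it is linear over
`E = R[x², y²]`, and `R[x, y] = E ⊕ xE ⊕ yE ⊕ xyE`; the components of a polynomial are read
off with `∂/∂x` and `∂/∂y`. Writing `f = p + xq + yr + xys`, one finds
`δ f = x²q + x(aq) + y(ar + x²s) + xy(2as)`, so `δ f = 0` forces `q = 0` and `ar = x²s`, i.e.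
`f = p + a⁻¹ s (x²y + axy)`.
-/

theorem Derivation.map_sq_eq_zero {R A M : Type*} [CommSemiring R] [CommRing A] [Algebra R A]
    [CharP A 2] [AddCommMonoid M] [Module A M] [Module R M] (D : Derivation R A M) (a : A) :
    D (a ^ 2) = 0 := by
  rw [D.leibniz_pow, ← Nat.cast_smul_eq_nsmul A, Nat.cast_ofNat, CharTwo.two_eq_zero, zero_smul]

namespace MvPolynomial

noncomputable def squaresSubalgebra (R : Type*) [CommSemiring R] :
    Subalgebra R (MvPolynomial (Fin 2) R) :=
  Algebra.adjoin R {X 0 ^ 2, X 1 ^ 2}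

section CommSemiring

variable {R : Type*} [CommSemiring R]

theorem C_mem_squaresSubalgebra (c : R) : (C c : MvPolynomial (Fin 2) R) ∈ squaresSubalgebra R :=
  Subalgebra.algebraMap_mem _ c

theorem X_sq_mem_squaresSubalgebra (i : Fin 2) :
    (X i ^ 2 : MvPolynomial (Fin 2) R) ∈ squaresSubalgebra R := by
  apply Algebra.subset_adjoin
  fin_cases i <;> simp

theorem exists_squaresSubalgebra_decomposition (f : MvPolynomial (Fin 2) R) :
    ∃ p ∈ squaresSubalgebra R, ∃ q ∈ squaresSubalgebra R, ∃ r ∈ squaresSubalgebra R,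
      ∃ s ∈ squaresSubalgebra R, f = p + X 0 * q + X 1 * r + X 0 * X 1 * s := by
  have hx := X_sq_mem_squaresSubalgebra (R := R) 0
  have hy := X_sq_mem_squaresSubalgebra (R := R) 1
  induction f using MvPolynomial.induction_on with
  | C c =>
    exact ⟨C c, C_mem_squaresSubalgebra c, 0, zero_mem _, 0, zero_mem _, 0, zero_mem _, by ring⟩
  | add f g hf hg =>
    obtain ⟨p, hp, q, hq, r, hr, s, hs, rfl⟩ := hf
    obtain ⟨p', hp', q', hq', r', hr', s', hs', rfl⟩ := hg
    exact ⟨p + p', add_mem hp hp', q + q', add_mem hq hq', r + r', add_mem hr hr',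
      s + s', add_mem hs hs', by ring⟩
  | mul_X f i hf =>
    obtain ⟨p, hp, q, hq, r, hr, s, hs, rfl⟩ := hf
    fin_cases i
    · exact ⟨X 0 ^ 2 * q, mul_mem hx hq, p, hp, X 0 ^ 2 * s, mul_mem hx hs, r, hr,
        by simp; ring⟩
    · exact ⟨X 1 ^ 2 * r, mul_mem hy hr, X 1 ^ 2 * s, mul_mem hy hs, p, hp, q, hq,
        by simp; ring⟩

end CommSemiring

section CharTwo

variable {R : Type*} [CommRing R] [CharP R 2]

theorem _root_.Derivation.map_eq_zero_of_mem_squaresSubalgebra {M : Type*} [AddCommMonoid M]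
    [Module (MvPolynomial (Fin 2) R) M] [Module R M]
    (D : Derivation R (MvPolynomial (Fin 2) R) M) {f : MvPolynomial (Fin 2) R}
    (hf : f ∈ squaresSubalgebra R) : D f = 0 := by
  refine D.eqOn_adjoin (D2 := 0) ?_ hf
  rintro g (rfl | rfl) <;> simp [D.map_sq_eq_zero]

theorem _root_.Derivation.map_squaresSubalgebra_decomposition
    (D : Derivation R (MvPolynomial (Fin 2) R) (MvPolynomial (Fin 2) R))
    {p q r s : MvPolynomial (Fin 2) R} (hp : p ∈ squaresSubalgebra R)
    (hq : q ∈ squaresSubalgebra R) (hr : r ∈ squaresSubalgebra R)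
    (hs : s ∈ squaresSubalgebra R) :
    D (p + X 0 * q + X 1 * r + X 0 * X 1 * s) =
      D (X 0) * (q + X 1 * s) + D (X 1) * (r + X 0 * s) := by
  simp only [map_add, Derivation.leibniz, smul_eq_mul,
    D.map_eq_zero_of_mem_squaresSubalgebra hp, D.map_eq_zero_of_mem_squaresSubalgebra hq,
    D.map_eq_zero_of_mem_squaresSubalgebra hr, D.map_eq_zero_of_mem_squaresSubalgebra hs]
  ring

theorem eq_zero_of_squaresSubalgebra_decomposition_eq_zero {p q r s : MvPolynomial (Fin 2) R}
    (hp : p ∈ squaresSubalgebra R) (hq : q ∈ squaresSubalgebra R)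
    (hr : r ∈ squaresSubalgebra R) (hs : s ∈ squaresSubalgebra R)
    (h : p + X 0 * q + X 1 * r + X 0 * X 1 * s = 0) :
    p = 0 ∧ q = 0 ∧ r = 0 ∧ s = 0 := by
  have h₀ : q + X 1 * s = 0 := by
    simpa [(pderiv 0).map_squaresSubalgebra_decomposition hp hq hr hs] using congrArg (pderiv 0) h
  have h₁ : r + X 0 * s = 0 := by
    simpa [(pderiv 1).map_squaresSubalgebra_decomposition hp hq hr hs] using congrArg (pderiv 1) h
  have hs₀ : s = 0 := by
    simpa [(pderiv 1).map_eq_zero_of_mem_squaresSubalgebra hq,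
      (pderiv 1).map_eq_zero_of_mem_squaresSubalgebra hs] using congrArg (pderiv 1) h₀
  subst hs₀
  simp_all

variable {a : R} {δ : Derivation R (MvPolynomial (Fin 2) R) (MvPolynomial (Fin 2) R)}

theorem map_eq_zero_of_mem_adjoin (hx : δ (X 0) = X 0 * (X 0 + C a)) (hy : δ (X 1) = C a * X 1)
    {f : MvPolynomial (Fin 2) R}
    (hf : f ∈ Algebra.adjoin R {X 0 ^ 2, X 1 ^ 2, X 0 ^ 2 * X 1 + C a * (X 0 * X 1)}) :
    δ f = 0 := by
  refine δ.eqOn_adjoin (D2 := 0) ?_ hf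
  rintro g (rfl | rfl | rfl)
  · exact δ.map_sq_eq_zero _
  · exact δ.map_sq_eq_zero _
  · rw [Derivation.zero_apply,
      show (X 0 ^ 2 * X 1 + C a * (X 0 * X 1) : MvPolynomial (Fin 2) R)
        = 0 + X 0 * 0 + X 1 * X 0 ^ 2 + X 0 * X 1 * C a by ring,
      δ.map_squaresSubalgebra_decomposition (zero_mem _) (zero_mem _)
        (X_sq_mem_squaresSubalgebra 0) (C_mem_squaresSubalgebra a), hx, hy]
    linear_combination (C a * X 0 ^ 2 * X 1 + C a * C a * X 0 * X 1) *
      CharTwo.two_eq_zero (R := MvPolynomial (Fin 2) R)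

end CharTwo

theorem mem_adjoin_of_map_eq_zero {k : Type*} [Field k] [CharP k 2] {a : k} (ha : a ≠ 0)
    {δ : Derivation k (MvPolynomial (Fin 2) k) (MvPolynomial (Fin 2) k)}
    (hx : δ (X 0) = X 0 * (X 0 + C a)) (hy : δ (X 1) = C a * X 1) {f : MvPolynomial (Fin 2) k}
    (hf : δ f = 0) :
    f ∈ Algebra.adjoin k {X 0 ^ 2, X 1 ^ 2, X 0 ^ 2 * X 1 + C a * (X 0 * X 1)} := by
  obtain ⟨p, hp, q, hq, r, hr, s, hs, rfl⟩ := exists_squaresSubalgebra_decomposition f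
  have hδf : δ (p + X 0 * q + X 1 * r + X 0 * X 1 * s) = X 0 ^ 2 * q + X 0 * (C a * q)
      + X 1 * (C a * r + X 0 ^ 2 * s) + X 0 * X 1 * (C a * s + C a * s) := by
    rw [δ.map_squaresSubalgebra_decomposition hp hq hr hs, hx, hy]
    ring
  have hCa := C_mem_squaresSubalgebra a
  have hx₂ := X_sq_mem_squaresSubalgebra (R := k) 0
  obtain ⟨-, haq, har, -⟩ := eq_zero_of_squaresSubalgebra_decomposition_eq_zero
    (mul_mem hx₂ hq) (mul_mem hCa hq) (add_mem (mul_mem hCa hr) (mul_mem hx₂ hs))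
    (add_mem (mul_mem hCa hs) (mul_mem hCa hs)) (hδf ▸ hf)
  obtain rfl : q = 0 := by simpa [ha] using haq
  have hinv : C a⁻¹ * C a = (1 : MvPolynomial (Fin 2) k) := by
    rw [← C_mul, inv_mul_cancel₀ ha, C_1]
  have hsq : squaresSubalgebra k ≤
      Algebra.adjoin k {X 0 ^ 2, X 1 ^ 2, X 0 ^ 2 * X 1 + C a * (X 0 * X 1)} :=
    Algebra.adjoin_mono (by simp [Set.insert_subset_iff])
  rw [show p + X 0 * 0 + X 1 * r + X 0 * X 1 * s
      = p + C a⁻¹ * s * (X 0 ^ 2 * X 1 + C a * (X 0 * X 1)) by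
    linear_combination X 1 * C a⁻¹ * har - (X 1 * r + X 0 * X 1 * s) * hinv
      - C a⁻¹ * s * X 0 ^ 2 * X 1 * CharTwo.two_eq_zero (R := MvPolynomial (Fin 2) k)]
  exact add_mem (hsq hp) (mul_mem (mul_mem (Subalgebra.algebraMap_mem _ a⁻¹) (hsq hs))
    (Algebra.subset_adjoin (by simp)))

end MvPolynomial

theorem stmt_2_general (k : Type*) [Field k] [CharP k 2] (a : k) (ha : a ≠ 0)
    (δ : Derivation k (MvPolynomial (Fin 2) k) (MvPolynomial (Fin 2) k))
    (hδ : δ = mkDerivation k ![(X 0 : MvPolynomial (Fin 2) k) * (X 0 + C a), C a * X 1]) :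
    {f : MvPolynomial (Fin 2) k | δ f = 0} =
      ↑(Algebra.adjoin k ({X 0 ^ 2, X 1 ^ 2, X 0 ^ 2 * X 1 + C a * (X 0 * X 1)} :
          Set (MvPolynomial (Fin 2) k))) := by
  have hx : δ (X 0) = X 0 * (X 0 + C a) := by simp [hδ, mkDerivation_X]
  have hy : δ (X 1) = C a * X 1 := by simp [hδ, mkDerivation_X]
  ext f
  exact ⟨mem_adjoin_of_map_eq_zero ha hx hy, map_eq_zero_of_mem_adjoin hx hy⟩

/-- For a ≠ 0 and δ = x(x+a)·∂/∂x + ay·∂/∂y, the kernel of δ equals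
the k-subalgebra generated by x², y², x²y + axy. -/
theorem stmt_2 (k : Type*) [Field k] [IsAlgClosed k] [CharP k 2] (a : k) (ha : a ≠ 0)
    (δ : Derivation k (MvPolynomial (Fin 2) k) (MvPolynomial (Fin 2) k))
    (hδ : δ = mkDerivation k ![(X 0 : MvPolynomial (Fin 2) k) * (X 0 + C a), C a * X 1]) :
    {f : MvPolynomial (Fin 2) k | δ f = 0} =
      ↑(Algebra.adjoin k ({X 0 ^ 2, X 1 ^ 2, X 0 ^ 2 * X 1 + C a * (X 0 * X 1)} :
          Set (MvPolynomial (Fin 2) k))) :=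
  stmt_2_general k a ha δ hδ
end

section
/- Let a ∈ k be nonzero. The k-subalgebra of k[x,y] generated by x², y² and x²y + axy is isomorphic, as a k-algebra, to k[X,Y,Z]/(Z² + X(X+a²)Y). -/
/-!
Map `k[X,Y,Z] → k[x,y]` by `X ↦ x²`, `Y ↦ y²`, `Z ↦ z := x²y + axy`; its image is the subalgebra in
question and, since `z² = x²(x² + a²)y²` in characteristic 2, it kills `f = Z² + X(X + a²)Y`.
Regarding `k[X,Y,Z]` as `k[X,Y][Z]` and dividing by the monic `f`, it remains to see that
`r₁(x²,y²) z + r₀(x²,y²) = 0` forces `r₀ = r₁ = 0`. Apply `∂/∂y`: in characteristic 2 it kills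
every polynomial in `x²`, `y²`, leaving `r₁(x²,y²) · x(x + a) = 0`.
-/

open MvPolynomial

theorem Polynomial.ker_eq_span_singleton_of_monic {R S G : Type*} [CommRing R] [Nontrivial R]
    [Ring S] [FunLike G (Polynomial R) S] [RingHomClass G (Polynomial R) S] {f : G}
    {F : Polynomial R} (hF : F.Monic) (hfF : f F = 0)
    (hinj : ∀ p : Polynomial R, p.degree < F.degree → f p = 0 → p = 0) :
    RingHom.ker f = Ideal.span {F} := by
  refine le_antisymm (fun p hp => ?_) ((Ideal.span_singleton_le_iff_mem _).2 hfF)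
  rw [Ideal.mem_span_singleton, ← Polynomial.modByMonic_eq_zero_iff_dvd hF]
  refine hinj _ (Polynomial.degree_modByMonic_lt p hF) ?_
  rw [Polynomial.modByMonic_eq_sub_mul_div p F, map_sub, map_mul, hfF, zero_mul, sub_zero]
  exact hp

theorem MvPolynomial.pderiv_expand_eq_zero {σ R : Type*} [CommRing R] (p : ℕ) [CharP R p]
    (i : σ) (q : MvPolynomial σ R) : pderiv i (expand p q) = 0 := by
  induction q using MvPolynomial.induction_on with
  | C c => simp
  | add q r hq hr => simp [hq, hr]
  | mul_X q j hq => simp [hq, Derivation.leibniz_pow]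

theorem MvPolynomial.eq_zero_of_expand_mul_add_expand_eq_zero {σ R : Type*} [CommRing R]
    [IsDomain R] {p : ℕ} [Fact p.Prime] [CharP R p] {z : MvPolynomial σ R} {i : σ}
    (hz : pderiv i z ≠ 0) {r₀ r₁ : MvPolynomial σ R} (h : expand p r₁ * z + expand p r₀ = 0) :
    r₀ = 0 ∧ r₁ = 0 := by
  have hinj := expand_injective (σ := σ) (R := R) (Fact.out : p.Prime).pos
  have h₁ : expand p r₁ = 0 := by
    simpa [pderiv_expand_eq_zero, hz] using congrArg (pderiv i) h
  obtain rfl : r₁ = 0 := hinj (h₁.trans (map_zero _).symm)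
  rw [map_zero, zero_mul, zero_add] at h
  exact ⟨hinj (h.trans (map_zero _).symm), rfl⟩

section

variable {k : Type*} [Field k]

noncomputable def aevalZ (a : k) :
    Polynomial (MvPolynomial (Fin 2) k) →ₐ[k] MvPolynomial (Fin 2) k :=
  Polynomial.aevalTower (expand 2) (X 0 ^ 2 * X 1 + C a * (X 0 * X 1))

theorem pderiv_one_z_ne_zero (a : k) :
    pderiv 1 (X 0 ^ 2 * X 1 + C a * (X 0 * X 1) : MvPolynomial (Fin 2) k) ≠ 0 := by
  have hX : pderiv 1 (X 0 ^ 2 * X 1 + C a * (X 0 * X 1) : MvPolynomial (Fin 2) k) =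
      X 0 * (X 0 + C a) := by
    simp only [map_add, Derivation.leibniz, Derivation.leibniz_pow, pderiv_X_self,
      pderiv_X_of_ne (show (0 : Fin 2) ≠ 1 by decide), derivation_C, smul_eq_mul]
    ring
  rw [hX]
  refine mul_ne_zero (X_ne_zero _) fun h => ?_
  simpa using congrArg (pderiv 0) h

theorem aevalZ_relation [CharP k 2] (a : k) :
    aevalZ a (Polynomial.X ^ 2 + Polynomial.C (X 0 * (X 0 + C (a ^ 2)) * X 1)) = 0 := by
  simp only [aevalZ, map_add, map_pow, Polynomial.aevalTower_X, Polynomial.aevalTower_C,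
    map_mul, expand_X, expand_C]
  linear_combination X 0 ^ 2 * X 1 ^ 2 * (X 0 ^ 2 + C a * X 0 + C a ^ 2) *
    (CharTwo.two_eq_zero : (2 : MvPolynomial (Fin 2) k) = 0)

theorem ker_aevalZ [CharP k 2] (a : k) :
    RingHom.ker (aevalZ a) =
      Ideal.span {Polynomial.X ^ 2 + Polynomial.C (X 0 * (X 0 + C (a ^ 2)) * X 1)} := by
  have hF : (Polynomial.X ^ 2 +
      Polynomial.C (X 0 * (X 0 + C (a ^ 2)) * X 1 : MvPolynomial (Fin 2) k)).Monic :=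
    Polynomial.monic_X_pow_add (Polynomial.degree_C_le.trans_lt (by norm_num))
  refine Polynomial.ker_eq_span_singleton_of_monic hF (aevalZ_relation a) fun p hp hp0 => ?_
  rw [Polynomial.degree_X_pow_add_C two_pos] at hp
  have hlin := Polynomial.eq_X_add_C_of_degree_le_one (Order.le_of_lt_succ hp)
  rw [hlin, aevalZ, map_add, map_mul, Polynomial.aevalTower_X, Polynomial.aevalTower_C,
      Polynomial.aevalTower_C] at hp0
  obtain ⟨h₀, h₁⟩ := eq_zero_of_expand_mul_add_expand_eq_zero (pderiv_one_z_ne_zero a) hp0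
  rw [hlin, h₀, h₁]
  simp

variable (k) in
/-- `X 2` becomes the polynomial variable over `k[X 0, X 1]`. -/
noncomputable def finThreeEquivPolynomial :
    MvPolynomial (Fin 3) k ≃ₐ[k] Polynomial (MvPolynomial (Fin 2) k) :=
  (renameEquiv k (finRotate 3)).trans (finSuccEquiv k 2)

theorem finThreeEquivPolynomial_X (i : Fin 3) :
    finThreeEquivPolynomial k (X i) = finSuccEquiv k 2 (X (finRotate 3 i)) := by
  rw [finThreeEquivPolynomial, AlgEquiv.trans_apply, renameEquiv_apply, rename_X]

@[simp]
theorem finThreeEquivPolynomial_X_zero :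
    finThreeEquivPolynomial k (X 0) = Polynomial.C (X 0) := by
  rw [finThreeEquivPolynomial_X, show finRotate 3 0 = Fin.succ 0 by decide, finSuccEquiv_X_succ]

@[simp]
theorem finThreeEquivPolynomial_X_one :
    finThreeEquivPolynomial k (X 1) = Polynomial.C (X 1) := by
  rw [finThreeEquivPolynomial_X, show finRotate 3 1 = Fin.succ 1 by decide, finSuccEquiv_X_succ]

@[simp]
theorem finThreeEquivPolynomial_X_two : finThreeEquivPolynomial k (X 2) = Polynomial.X := by
  rw [finThreeEquivPolynomial_X, show finRotate 3 2 = 0 by decide, finSuccEquiv_X_zero]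

@[simp]
theorem finThreeEquivPolynomial_C (c : k) :
    finThreeEquivPolynomial k (C c) = Polynomial.C (C c) :=
  (finThreeEquivPolynomial k).commutes c

theorem aevalZ_comp_finThreeEquivPolynomial (a : k) :
    (aevalZ a).comp (finThreeEquivPolynomial k).toAlgHom =
      aeval ![X 0 ^ 2, X 1 ^ 2, X 0 ^ 2 * X 1 + C a * (X 0 * X 1)] := by
  refine MvPolynomial.algHom_ext fun i => ?_
  fin_cases i <;> simp [aevalZ]

theorem finThreeEquivPolynomial_relation (a : k) :
    finThreeEquivPolynomial k ((X 2 : MvPolynomial (Fin 3) k) ^ 2 + X 0 * (X 0 + C (a ^ 2)) * X 1) =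
      Polynomial.X ^ 2 + Polynomial.C (X 0 * (X 0 + C (a ^ 2)) * X 1) := by
  simp

theorem range_aevalZ (a : k) :
    (aevalZ a).range = Algebra.adjoin k {X 0 ^ 2, X 1 ^ 2, X 0 ^ 2 * X 1 + C a * (X 0 * X 1)} := by
  have hsurj : (finThreeEquivPolynomial k).toAlgHom.range = ⊤ :=
    (AlgHom.range_eq_top _).2 (finThreeEquivPolynomial k).surjective
  rw [← Matrix.range_cons_cons_empty, ← Set.singleton_union, ← Matrix.range_cons,
    Algebra.adjoin_range_eq_range_aeval, ← aevalZ_comp_finThreeEquivPolynomial, AlgHom.range_comp,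
    hsurj, Algebra.map_top]

end

theorem stmt_3_general (k : Type*) [Field k] [CharP k 2] (a : k) :
    Nonempty
      ((Algebra.adjoin k ({X 0 ^ 2, X 1 ^ 2, X 0 ^ 2 * X 1 + C a * (X 0 * X 1)} :
          Set (MvPolynomial (Fin 2) k))) ≃ₐ[k]
        (MvPolynomial (Fin 3) k ⧸
          Ideal.span {(X 2 : MvPolynomial (Fin 3) k) ^ 2 +
            X 0 * (X 0 + C (a ^ 2)) * X 1})) := by
  refine ⟨AlgEquiv.symm ?_⟩
  refine (Ideal.quotientEquivAlg _ _ (finThreeEquivPolynomial k) ?_).trans <|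
    (Ideal.quotientEquivAlgOfEq k (ker_aevalZ a).symm).trans <|
    (Ideal.quotientKerEquivRange (aevalZ a)).trans (Subalgebra.equivOfEq _ _ (range_aevalZ a))
  rw [Ideal.map_span, Set.image_singleton]
  exact congrArg (fun p => Ideal.span {p}) (finThreeEquivPolynomial_relation a).symm

/-- For a ≠ 0, k[x², y², x²y + axy] ≅ k[X,Y,Z]/(Z² + X(X+a²)Y). -/
theorem stmt_3 (k : Type*) [Field k] [IsAlgClosed k] [CharP k 2] (a : k) (ha : a ≠ 0) :
    Nonempty
      ((Algebra.adjoin k ({X 0 ^ 2, X 1 ^ 2, X 0 ^ 2 * X 1 + C a * (X 0 * X 1)} :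
          Set (MvPolynomial (Fin 2) k))) ≃ₐ[k]
        (MvPolynomial (Fin 3) k ⧸
          Ideal.span {(X 2 : MvPolynomial (Fin 3) k) ^ 2 +
            X 0 * (X 0 + C (a ^ 2)) * X 1})) :=
  stmt_3_general k a
end

section
/- Let a ∈ k be nonzero and let R = k[X,Y,Z]/(Z² + X(X+a²)Y). Then the completion of R at the maximal ideal generated by the images of X, Y, Z is isomorphic, as a k-algebra, to k[[X,Y,Z]]/(Z² + XY). -/
/-!
Completion is exact on finitely generated modules over a Noetherian ring, so completing
`0 → R --r--> R → R ⧸ (r) → 0` identifies the completion of `R ⧸ (r)` with `R̂ ⧸ (r)` whenever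
`r` is a non-zero-divisor. For `R = k[X,Y,Z]` completed at `(X,Y,Z)` this gives `k[[X,Y,Z]] ⧸ (r)`.
Since `a ≠ 0`, `X + a²` is a unit of `k[[X,Y,Z]]`, so the substitution `Y ↦ (X + a²)Y` is an
automorphism; it maps `Z² + XY` to `Z² + X(X + a²)Y`.
-/

namespace AdicCompletion

variable {R S M : Type*} [CommRing R] [CommRing S] [Algebra R S]
  [AddCommGroup M] [Module R M] [Module S M] [IsScalarTower R S M] (I : Ideal R)

theorem restrictScalars_map_pow_smul_top (n : ℕ) :
    ((I.map (algebraMap R S)) ^ n • ⊤ : Submodule S M).restrictScalars R =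
      (I ^ n • ⊤ : Submodule R M) := by
  rw [← Ideal.map_pow, Submodule.restrictScalars_map_smul_eq, Submodule.restrictScalars_top]

def restrictScalarsLevelEquiv (n : ℕ) :
    (M ⧸ (I ^ n • ⊤ : Submodule R M)) ≃ₗ[R]
      M ⧸ ((I.map (algebraMap R S)) ^ n • ⊤ : Submodule S M) :=
  (Submodule.quotEquivOfEq _ _ (restrictScalars_map_pow_smul_top I n).symm).trans
    (Submodule.Quotient.restrictScalarsEquiv R _)

/-- Bridges completions of `R`-modules, for which exactness is available, and the completion of
the ring `S`. -/
def restrictScalarsEquiv :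
    AdicCompletion I M ≃ₗ[R] AdicCompletion (I.map (algebraMap R S)) M where
  toFun x := ⟨fun n ↦ restrictScalarsLevelEquiv I n (x.val n), fun {m n} hmn ↦ by
    dsimp only
    rw [← transitionMap_comp_eval_apply I M hmn x]
    induction x.val n using Submodule.Quotient.induction_on with
    | _ y => rfl⟩
  invFun x := ⟨fun n ↦ (restrictScalarsLevelEquiv I n).symm (x.val n), fun {m n} hmn ↦ by
    dsimp only
    rw [← transitionMap_comp_eval_apply _ M hmn x]
    induction x.val n using Submodule.Quotient.induction_on with
    | _ y => rfl⟩
  map_add' x y := by ext n; exact map_add _ _ _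
  map_smul' c x := by ext n; exact (restrictScalarsLevelEquiv I n).map_smul c (x.val n)
  left_inv x := by ext n; exact LinearEquiv.symm_apply_apply _ _
  right_inv x := by ext n; exact LinearEquiv.apply_symm_apply _ _

variable (S) in
noncomputable def mapAlgHom :
    AdicCompletion I R →ₐ[R] AdicCompletion (I.map (algebraMap R S)) S :=
  let L := (restrictScalarsEquiv I).toLinearMap ∘ₗ
    (map I (Algebra.linearMap R S)).restrictScalars R
  have val_L (x : AdicCompletion I R) (n : ℕ) (a : R) (hx : x.val n = Submodule.Quotient.mk a) :
      (L x).val n = Ideal.Quotient.mk _ (algebraMap R S a) := by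
    change restrictScalarsLevelEquiv I n ((Algebra.linearMap R S).reduceModIdeal (I ^ n)
      (x.val n)) = _
    rw [hx]
    rfl
  AlgHom.ofLinearMap L
    (by
      ext n
      rw [val_L 1 n 1 rfl, map_one, map_one]
      rfl)
    (fun x y ↦ by
      ext n
      obtain ⟨a, ha⟩ := Submodule.Quotient.mk_surjective _ (x.val n)
      obtain ⟨b, hb⟩ := Submodule.Quotient.mk_surjective _ (y.val n)
      rw [val_mul, val_L x n a ha.symm, val_L y n b hb.symm,
        val_L (x * y) n (a * b) (by rw [val_mul, ← ha, ← hb]; rfl), map_mul, map_mul])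

theorem mapAlgHom_apply (x : AdicCompletion I R) :
    mapAlgHom S I x = restrictScalarsEquiv I (map I (Algebra.linearMap R S) x) :=
  rfl

theorem mapAlgHom_surjective (h : Function.Surjective (algebraMap R S)) :
    Function.Surjective (mapAlgHom S I) :=
  (restrictScalarsEquiv I).surjective.comp (map_surjective I (f := Algebra.linearMap R S) h)

theorem map_mulLeft (r : R) (x : AdicCompletion I R) :
    map I (LinearMap.mulLeft R r) x = algebraMap R _ r * x := by
  have h := (map I (LinearMap.mulLeft R r)).map_smul x 1
  change map I _ (x * 1) = x * map I (LinearMap.mulLeft R r) 1 at h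
  rw [mul_one] at h
  rw [h, mul_comm]
  congr 1
  exact (map_of I (LinearMap.mulLeft R r) 1).trans (by simp [algebraMap_apply])

theorem ker_mapAlgHom_quotient_span_singleton [IsNoetherianRing R] {r : R}
    (hr : IsLeftRegular r) :
    RingHom.ker (mapAlgHom (R ⧸ Ideal.span {r}) I) =
      Ideal.span {algebraMap R (AdicCompletion I R) r} := by
  have hexact :
      Function.Exact (LinearMap.mulLeft R r) (Algebra.linearMap R (R ⧸ Ideal.span {r})) := by
    intro y
    simp [Ideal.Quotient.eq_zero_iff_mem, Ideal.mem_span_singleton', mul_comm]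
  ext x
  rw [RingHom.mem_ker, mapAlgHom_apply, LinearEquiv.map_eq_zero_iff,
    map_exact (I := I) hr hexact Ideal.Quotient.mk_surjective, Ideal.mem_span_singleton']
  simp [map_mulLeft, mul_comm]

noncomputable def quotientSpanSingletonAlgEquiv [IsNoetherianRing R] {r : R}
    (hr : IsLeftRegular r) :
    (AdicCompletion I R ⧸ Ideal.span {algebraMap R (AdicCompletion I R) r}) ≃ₐ[R]
      AdicCompletion (I.map (algebraMap R (R ⧸ Ideal.span {r}))) (R ⧸ Ideal.span {r}) :=
  (Ideal.quotientEquivAlgOfEq R (ker_mapAlgHom_quotient_span_singleton I hr).symm).trans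
    (Ideal.quotientKerAlgEquivOfSurjective (mapAlgHom_surjective I Ideal.Quotient.mk_surjective))

end AdicCompletion

namespace MvPowerSeries

section Completion

variable {σ K : Type*} [Finite σ] [CommRing K] [IsNoetherianRing K]

noncomputable def quotientSpanSingletonAlgEquivAdicCompletion {r : MvPolynomial σ K}
    (hr : IsLeftRegular r) :
    (MvPowerSeries σ K ⧸ Ideal.span {(r : MvPowerSeries σ K)}) ≃ₐ[MvPolynomial σ K]
      AdicCompletion ((MvPolynomial.idealOfVars σ K).map
        (algebraMap _ (MvPolynomial σ K ⧸ Ideal.span {r})))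
        (MvPolynomial σ K ⧸ Ideal.span {r}) :=
  (Ideal.quotientEquivAlg _ _ (toAdicCompletionAlgEquiv σ K) (by
    rw [Ideal.map_span, Set.image_singleton]
    simp [toAdicCompletion_coe, AdicCompletion.algebraMap_apply])).trans
    (AdicCompletion.quotientSpanSingletonAlgEquiv _ hr)

end Completion

section ScaleVar

variable {σ K : Type*} [Finite σ] [DecidableEq σ] [CommRing K]

theorem hasSubst_update_mul_X (i : σ) (w : MvPowerSeries σ K) :
    HasSubst (Function.update X i (w * X i)) :=
  hasSubst_of_constantCoeff_zero fun s ↦ by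
    rcases eq_or_ne s i with rfl | hs
    · simp
    · simp [hs]

/-- The substitution `X i ↦ w * X i`, fixing the other variables. -/
noncomputable def scaleVar (i : σ) (w : MvPowerSeries σ K) :
    MvPowerSeries σ K →ₐ[K] MvPowerSeries σ K :=
  substAlgHom (hasSubst_update_mul_X i w)

theorem scaleVar_X_self (i : σ) (w : MvPowerSeries σ K) : scaleVar i w (X i) = w * X i := by
  rw [scaleVar, substAlgHom_X, Function.update_self]

theorem scaleVar_X_of_ne {i j : σ} (h : j ≠ i) (w : MvPowerSeries σ K) :
    scaleVar i w (X j) = X j := by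
  rw [scaleVar, substAlgHom_X, Function.update_of_ne h]

theorem scaleVar_X_add_C {i j : σ} (h : j ≠ i) (c : K) (w : MvPowerSeries σ K) :
    scaleVar i w (X j + C c) = X j + C c := by
  rw [map_add, scaleVar_X_of_ne h, c_eq_algebraMap, AlgHom.commutes]

theorem scaleVar_one (i : σ) : scaleVar i (1 : MvPowerSeries σ K) = AlgHom.id K _ := by
  ext f : 1
  rw [scaleVar, substAlgHom_apply, one_mul, Function.update_eq_self, subst_self, AlgHom.id_apply,
    id]

theorem scaleVar_scaleVar (i : σ) {v w : MvPowerSeries σ K} (hw : scaleVar i v w = w)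
    (f : MvPowerSeries σ K) : scaleVar i v (scaleVar i w f) = scaleVar i (w * v) f := by
  have hfamily : (fun s ↦ scaleVar i v (Function.update X i (w * X i) s)) =
      Function.update X i (w * v * X i) := by
    funext s
    rcases eq_or_ne s i with rfl | hs
    · rw [Function.update_self, Function.update_self, map_mul, hw, scaleVar_X_self, mul_assoc]
    · rw [Function.update_of_ne hs, Function.update_of_ne hs, scaleVar_X_of_ne hs]
  rw [scaleVar, scaleVar, substAlgHom_comp_substAlgHom_apply, scaleVar, substAlgHom_apply,
    substAlgHom_apply]
  exact congrArg (subst · f) hfamily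

theorem scaleVar_units_inv {i : σ} {u : (MvPowerSeries σ K)ˣ}
    (hu : ∀ w : MvPowerSeries σ K, scaleVar i w ↑u = ↑u) (w : MvPowerSeries σ K) :
    scaleVar i w ↑u⁻¹ = ↑u⁻¹ :=
  calc scaleVar i w ↑u⁻¹ = scaleVar i w ↑u⁻¹ * (↑u * ↑u⁻¹) := by simp
    _ = scaleVar i w (↑u⁻¹ * ↑u) * ↑u⁻¹ := by rw [map_mul, hu]; ring
    _ = ↑u⁻¹ := by simp

/-- The hypothesis `hu` says that `u` does not involve `X i`. -/
noncomputable def scaleVarEquiv (i : σ) (u : (MvPowerSeries σ K)ˣ)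
    (hu : ∀ w : MvPowerSeries σ K, scaleVar i w ↑u = ↑u) :
    MvPowerSeries σ K ≃ₐ[K] MvPowerSeries σ K :=
  AlgEquiv.ofAlgHom (scaleVar i (u : MvPowerSeries σ K)) (scaleVar i ↑u⁻¹)
    (AlgHom.ext fun f ↦ by
      rw [AlgHom.comp_apply, scaleVar_scaleVar i (scaleVar_units_inv hu _), Units.inv_mul,
        scaleVar_one])
    (AlgHom.ext fun f ↦ by
      rw [AlgHom.comp_apply, scaleVar_scaleVar i (hu _), Units.mul_inv, scaleVar_one])

theorem scaleVarEquiv_apply (i : σ) (u : (MvPowerSeries σ K)ˣ)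
    (hu : ∀ w : MvPowerSeries σ K, scaleVar i w ↑u = ↑u) (f : MvPowerSeries σ K) :
    scaleVarEquiv i u hu f = scaleVar i (u : MvPowerSeries σ K) f :=
  rfl

end ScaleVar

end MvPowerSeries

open MvPowerSeries in
noncomputable def quotientSpanZSqAddXYAlgEquiv {k : Type*} [Field k] {a : k} (ha : a ≠ 0) :
    (MvPowerSeries (Fin 3) k ⧸
        Ideal.span {(X 2 : MvPowerSeries (Fin 3) k) ^ 2 + X 0 * X 1}) ≃ₐ[k]
      MvPowerSeries (Fin 3) k ⧸ Ideal.span {((MvPolynomial.X 2 ^ 2 + MvPolynomial.X 0 *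
        (MvPolynomial.X 0 + MvPolynomial.C (a ^ 2)) * MvPolynomial.X 1 :
          MvPolynomial (Fin 3) k) : MvPowerSeries (Fin 3) k)} :=
  have hunit : IsUnit (X 0 + C (a ^ 2) : MvPowerSeries (Fin 3) k) := by
    rw [isUnit_iff_constantCoeff]
    simpa using pow_ne_zero 2 ha
  Ideal.quotientEquivAlg _ _ (scaleVarEquiv 1 hunit.unit (scaleVar_X_add_C (by decide) _)) (by
    rw [Ideal.map_span, Set.image_singleton]
    congr 2
    push_cast
    simp only [RingHom.coe_coe, scaleVarEquiv_apply, map_add, map_pow, map_mul, scaleVar_X_self,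
      scaleVar_X_of_ne (show (0 : Fin 3) ≠ 1 by decide),
      scaleVar_X_of_ne (show (2 : Fin 3) ≠ 1 by decide), IsUnit.unit_spec]
    ring)

theorem nonempty_algEquiv_of_ringEquiv {k A C B : Type*} [CommRing k] [CommRing A] [CommRing C]
    [CommRing B] [Algebra k A] [Algebra A C] [Algebra k B] (e : C ≃+* B)
    (he : ∀ c, e (algebraMap A C (algebraMap k A c)) = algebraMap k B c) :
    letI := ((algebraMap A C).comp (algebraMap k A)).toAlgebra
    Nonempty (C ≃ₐ[k] B) :=
  letI := ((algebraMap A C).comp (algebraMap k A)).toAlgebra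
  ⟨AlgEquiv.ofRingEquiv he⟩

open MvPolynomial

theorem stmt_4_general (k : Type*) [Field k] (a : k) (ha : a ≠ 0)
    (m : Ideal (MvPolynomial (Fin 3) k ⧸
        Ideal.span {(X 2 : MvPolynomial (Fin 3) k) ^ 2 + X 0 * (X 0 + C (a ^ 2)) * X 1}))
    (hm : m = Ideal.span {Ideal.Quotient.mk _ (X 0), Ideal.Quotient.mk _ (X 1),
        Ideal.Quotient.mk _ (X 2)}) :
    letI : Algebra k (AdicCompletion m (MvPolynomial (Fin 3) k ⧸
        Ideal.span {(X 2 : MvPolynomial (Fin 3) k) ^ 2 + X 0 * (X 0 + C (a ^ 2)) * X 1})) :=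
      ((algebraMap
          (MvPolynomial (Fin 3) k ⧸
            Ideal.span {(X 2 : MvPolynomial (Fin 3) k) ^ 2 + X 0 * (X 0 + C (a ^ 2)) * X 1})
          (AdicCompletion m (MvPolynomial (Fin 3) k ⧸
            Ideal.span {(X 2 : MvPolynomial (Fin 3) k) ^ 2 +
              X 0 * (X 0 + C (a ^ 2)) * X 1}))).comp
        (algebraMap k _)).toAlgebra
    Nonempty
      ((AdicCompletion m (MvPolynomial (Fin 3) k ⧸
          Ideal.span {(X 2 : MvPolynomial (Fin 3) k) ^ 2 + X 0 * (X 0 + C (a ^ 2)) * X 1})) ≃ₐ[k]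
        (MvPowerSeries (Fin 3) k ⧸
          Ideal.span {(MvPowerSeries.X 2 : MvPowerSeries (Fin 3) k) ^ 2 +
            MvPowerSeries.X 0 * MvPowerSeries.X 1})) := by
  obtain rfl : m = (idealOfVars (Fin 3) k).map (algebraMap _ _) := by
    rw [hm, Ideal.map_span, ← Set.range_comp]
    congr 1
    ext x
    simp [Fin.exists_fin_succ, eq_comm]
  have hf : (X 2 ^ 2 + X 0 * (X 0 + C (a ^ 2)) * X 1 : MvPolynomial (Fin 3) k) ≠ 0 := fun h ↦ by
    simpa using congrArg (eval ![0, 0, 1]) h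
  let e := MvPowerSeries.quotientSpanSingletonAlgEquivAdicCompletion (IsRegular.of_ne_zero hf).left
  refine nonempty_algEquiv_of_ringEquiv
    (e.symm.toRingEquiv.trans (quotientSpanZSqAddXYAlgEquiv ha).symm.toRingEquiv) fun c ↦ ?_
  change (quotientSpanZSqAddXYAlgEquiv ha).symm
    (e.symm (algebraMap (MvPolynomial (Fin 3) k) _ (C c))) = _
  have hC : (C c : MvPolynomial (Fin 3) k) = algebraMap k _ c := rfl
  rw [AlgEquiv.commutes, hC, ← IsScalarTower.algebraMap_apply, AlgEquiv.commutes]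

/-- For a ≠ 0 and R = k[X,Y,Z]/(Z² + X(X+a²)Y), the completion of R at the
maximal ideal generated by the images of X, Y, Z is isomorphic, as a k-algebra, to
k[[X,Y,Z]]/(Z² + XY). -/
theorem stmt_4 (k : Type*) [Field k] [IsAlgClosed k] [CharP k 2] (a : k) (ha : a ≠ 0)
    (m : Ideal (MvPolynomial (Fin 3) k ⧸
        Ideal.span {(X 2 : MvPolynomial (Fin 3) k) ^ 2 + X 0 * (X 0 + C (a ^ 2)) * X 1}))
    (hm : m = Ideal.span {Ideal.Quotient.mk _ (X 0), Ideal.Quotient.mk _ (X 1),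
        Ideal.Quotient.mk _ (X 2)}) :
    letI : Algebra k (AdicCompletion m (MvPolynomial (Fin 3) k ⧸
        Ideal.span {(X 2 : MvPolynomial (Fin 3) k) ^ 2 + X 0 * (X 0 + C (a ^ 2)) * X 1})) :=
      ((algebraMap
          (MvPolynomial (Fin 3) k ⧸
            Ideal.span {(X 2 : MvPolynomial (Fin 3) k) ^ 2 + X 0 * (X 0 + C (a ^ 2)) * X 1})
          (AdicCompletion m (MvPolynomial (Fin 3) k ⧸
            Ideal.span {(X 2 : MvPolynomial (Fin 3) k) ^ 2 +
              X 0 * (X 0 + C (a ^ 2)) * X 1}))).comp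
        (algebraMap k _)).toAlgebra
    Nonempty
      ((AdicCompletion m (MvPolynomial (Fin 3) k ⧸
          Ideal.span {(X 2 : MvPolynomial (Fin 3) k) ^ 2 + X 0 * (X 0 + C (a ^ 2)) * X 1})) ≃ₐ[k]
        (MvPowerSeries (Fin 3) k ⧸
          Ideal.span {(MvPowerSeries.X 2 : MvPowerSeries (Fin 3) k) ^ 2 +
            MvPowerSeries.X 0 * MvPowerSeries.X 1})) :=
  stmt_4_general k a ha m hm
end

section
/- Let a ∈ k be nonzero, let n ≥ 2 be an integer, and let δ be the k-derivation (x² + a·n·x·y^{n−1})·∂/∂x + a·y^n·∂/∂y of k[x,y], where n denotes the image of the integer n in k. Then the kernel of δ equals the k-subalgebra of k[x,y] generated by x², y² and x²y + axy^n. -/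
/-!
In characteristic 2 every derivation of `k[x,y]` kills `k[x²,y²]`, over which `k[x,y]` is free
with basis `1, x, y, xy`. Writing `f = f₀ + f₁x + f₂y + f₃xy`, the equation `δ f = 0` becomes a
linear system over `k[x²,y²]`; according to the parity of `n` it forces
`f₁x + f₂y + f₃xy = g·(x²y + axyⁿ)` with `g ∈ k[x²,y²]`, because `x` is prime and coprime to `y`.
Conversely `w = x²y + axyⁿ` is a constant because `δ f = ∂w/∂y·∂f/∂x + ∂w/∂x·∂f/∂y` is the
Jacobian derivation of `w`, which kills `w` in characteristic 2.
-/

open MvPolynomial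

namespace Derivation

variable {R A : Type*} [CommSemiring R] [CommRing A] [Algebra R A]

def constants (D : Derivation R A A) : Subalgebra R A where
  carrier := {a | D a = 0}
  mul_mem' {a b} ha hb := by simp_all
  add_mem' ha hb := by simp_all
  algebraMap_mem' := D.map_algebraMap

@[simp]
lemma mem_constants {D : Derivation R A A} {a : A} : a ∈ D.constants ↔ D a = 0 := Iff.rfl

lemma map_sq_eq_zero_of_charTwo [CharP A 2] (D : Derivation R A A) (a : A) : D (a ^ 2) = 0 := by
  rw [leibniz_pow, CharTwo.two_nsmul]

end Derivation

section Expand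

variable {σ k : Type*} [CommRing k]

lemma expand_mem_adjoin_range_X_pow (p : ℕ) (g : MvPolynomial σ k) :
    expand p g ∈ Algebra.adjoin k (Set.range fun i => (X i : MvPolynomial σ k) ^ p) := by
  rw [Algebra.adjoin_range_eq_range_aeval]
  exact ⟨g, rfl⟩

lemma derivation_expand_two_eq_zero [CharP k 2]
    (D : Derivation k (MvPolynomial σ k) (MvPolynomial σ k)) (g : MvPolynomial σ k) :
    D (expand 2 g) = 0 :=
  D.mem_constants.1 <|
    Algebra.adjoin_le (Set.range_subset_iff.2 fun _ => D.map_sq_eq_zero_of_charTwo _)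
      (expand_mem_adjoin_range_X_pow 2 g)

end Expand

section SqCombination

variable {k : Type*} [CommRing k]

noncomputable def sqCombination (f₀ f₁ f₂ f₃ : MvPolynomial (Fin 2) k) : MvPolynomial (Fin 2) k :=
  expand 2 f₀ + expand 2 f₁ * X 0 + expand 2 f₂ * X 1 + expand 2 f₃ * (X 0 * X 1)

@[simp]
lemma sqCombination_zero_zero_zero (g : MvPolynomial (Fin 2) k) :
    sqCombination g 0 0 0 = expand 2 g := by
  simp [sqCombination]

lemma exists_eq_sqCombination (f : MvPolynomial (Fin 2) k) :
    ∃ f₀ f₁ f₂ f₃, f = sqCombination f₀ f₁ f₂ f₃ := by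
  induction f using MvPolynomial.induction_on with
  | C c => exact ⟨C c, 0, 0, 0, by rw [sqCombination_zero_zero_zero, expand_C]⟩
  | add p q hp hq =>
    obtain ⟨p₀, p₁, p₂, p₃, rfl⟩ := hp
    obtain ⟨q₀, q₁, q₂, q₃, rfl⟩ := hq
    exact ⟨p₀ + q₀, p₁ + q₁, p₂ + q₂, p₃ + q₃, by simp only [sqCombination, map_add]; ring⟩
  | mul_X p i hp =>
    obtain ⟨f₀, f₁, f₂, f₃, rfl⟩ := hp
    fin_cases i
    · exact ⟨f₁ * X 0, f₀, f₃ * X 0, f₂, by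
        simp only [sqCombination, map_mul, expand_X, Fin.zero_eta]; ring⟩
    · exact ⟨f₂ * X 1, f₃ * X 1, f₀, f₁, by
        simp only [sqCombination, map_mul, expand_X, Fin.mk_one]; ring⟩

variable [CharP k 2]

lemma derivation_sqCombination
    (D : Derivation k (MvPolynomial (Fin 2) k) (MvPolynomial (Fin 2) k))
    (f₀ f₁ f₂ f₃ : MvPolynomial (Fin 2) k) :
    D (sqCombination f₀ f₁ f₂ f₃) = expand 2 f₁ * D (X 0) + expand 2 f₂ * D (X 1) +
      expand 2 f₃ * (X 1 * D (X 0) + X 0 * D (X 1)) := by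
  simp only [sqCombination, map_add, Derivation.leibniz, derivation_expand_two_eq_zero,
    smul_eq_mul]
  ring

lemma pderiv_zero_sqCombination (f₀ f₁ f₂ f₃ : MvPolynomial (Fin 2) k) :
    pderiv 0 (sqCombination f₀ f₁ f₂ f₃) = sqCombination f₁ 0 f₃ 0 := by
  rw [derivation_sqCombination]
  simp [sqCombination, pderiv_X]

lemma pderiv_one_sqCombination (f₀ f₁ f₂ f₃ : MvPolynomial (Fin 2) k) :
    pderiv 1 (sqCombination f₀ f₁ f₂ f₃) = sqCombination f₂ f₃ 0 0 := by
  rw [derivation_sqCombination]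
  simp [sqCombination, pderiv_X]

lemma sqCombination_eq_zero {f₀ f₁ f₂ f₃ : MvPolynomial (Fin 2) k}
    (h : sqCombination f₀ f₁ f₂ f₃ = 0) : f₀ = 0 ∧ f₁ = 0 ∧ f₂ = 0 ∧ f₃ = 0 := by
  have h₃ := congrArg (fun f => pderiv 1 (pderiv 0 f)) h
  simp only [pderiv_zero_sqCombination, pderiv_one_sqCombination, sqCombination_zero_zero_zero,
    map_zero, expand_eq_zero two_pos] at h₃
  subst h₃
  have h₁ := congrArg (pderiv 0) h
  have h₂ := congrArg (pderiv 1) h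
  simp only [pderiv_zero_sqCombination, pderiv_one_sqCombination, sqCombination_zero_zero_zero,
    map_zero, expand_eq_zero two_pos] at h₁ h₂
  subst h₁ h₂
  simpa [expand_eq_zero two_pos] using h

end SqCombination

lemma exists_eq_X_mul_of_mul_X_eq {σ k : Type*} [Field k] {i j : σ} (hij : i ≠ j) {a : k}
    (ha : a ≠ 0) {u v : MvPolynomial σ k} {m : ℕ} (h : u * X i = C a * v * X j ^ m) :
    ∃ g, v = X i * g ∧ u = C a * g * X j ^ m := by
  have hX : Prime (X i : MvPolynomial σ k) := X_prime
  rcases hX.dvd_or_dvd (Dvd.intro_left u h) with hv | hj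
  · rcases hX.dvd_or_dvd hv with ha' | ⟨g, rfl⟩
    · exact absurd (isUnit_of_dvd_unit ha' (ha.isUnit.map C)) hX.not_isUnit
    · exact ⟨g, rfl, mul_right_cancel₀ (X_ne_zero i) (by rw [h]; ring)⟩
  · exact absurd (X_dvd_X.1 (hX.dvd_of_dvd_pow hj)) hij

section JacobianDerivation

variable {k : Type*} [Field k] [CharP k 2] {a : k} {n : ℕ}
  {δ : Derivation k (MvPolynomial (Fin 2) k) (MvPolynomial (Fin 2) k)}

lemma derivation_sqCombination_of_even {m : ℕ}
    (hx : δ (X 0) = X 0 ^ 2 + C (a * (2 * m : ℕ)) * (X 0 * X 1 ^ (2 * m - 1)))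
    (hy : δ (X 1) = C a * X 1 ^ (2 * m)) (f₀ f₁ f₂ f₃ : MvPolynomial (Fin 2) k) :
    δ (sqCombination f₀ f₁ f₂ f₃) =
      sqCombination (f₁ * X 0 + C a * f₂ * X 1 ^ m) (C a * f₃ * X 1 ^ m) (f₃ * X 0) 0 := by
  have h2m : ((2 * m : ℕ) : k) = 0 := by
    rw [Nat.cast_mul, Nat.cast_two, CharTwo.two_eq_zero, zero_mul]
  rw [derivation_sqCombination, hx, hy, h2m]
  simp only [sqCombination, map_add, map_mul, map_pow, expand_C, expand_X, map_zero]
  ring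

lemma derivation_sqCombination_of_odd {m : ℕ}
    (hx : δ (X 0) = X 0 ^ 2 + C (a * (2 * m + 1 : ℕ)) * (X 0 * X 1 ^ (2 * m + 1 - 1)))
    (hy : δ (X 1) = C a * X 1 ^ (2 * m + 1)) (f₀ f₁ f₂ f₃ : MvPolynomial (Fin 2) k) :
    δ (sqCombination f₀ f₁ f₂ f₃) =
      sqCombination (f₁ * X 0) (C a * f₁ * X 1 ^ m) (C a * f₂ * X 1 ^ m + f₃ * X 0) 0 := by
  have h2m : ((2 * m + 1 : ℕ) : k) = 1 := by
    rw [Nat.cast_succ, Nat.cast_mul, Nat.cast_two, CharTwo.two_eq_zero, zero_mul, zero_add]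
  rw [derivation_sqCombination, hx, hy, h2m, Nat.add_sub_cancel]
  simp only [sqCombination, map_add, map_mul, map_pow, expand_C, expand_X, map_zero, mul_one]
  -- the contributions `a·x·y^(2m+1)·f₃(x²,y²)` of `y·δx` and `x·δy` cancel
  linear_combination (C a * expand 2 f₃ * X 0 * X 1 ^ (2 * m + 1)) *
    (CharTwo.two_eq_zero : (2 : MvPolynomial (Fin 2) k) = 0)

lemma derivation_X_sq_mul_X_add_C_mul_eq_zero
    (hx : δ (X 0) = X 0 ^ 2 + C (a * n) * (X 0 * X 1 ^ (n - 1))) (hy : δ (X 1) = C a * X 1 ^ n) :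
    δ (X 0 ^ 2 * X 1 + C a * (X 0 * X 1 ^ n)) = 0 := by
  simp only [map_add, Derivation.leibniz, Derivation.leibniz_pow, δ.map_sq_eq_zero_of_charTwo,
    derivation_C, hx, hy, map_mul, map_natCast, smul_eq_mul, nsmul_eq_mul, mul_zero, add_zero]
  linear_combination (C a * X 0 ^ 2 * X 1 ^ n + C a ^ 2 * n * X 0 * X 1 ^ (n - 1) * X 1 ^ n) *
    (CharTwo.two_eq_zero : (2 : MvPolynomial (Fin 2) k) = 0)

lemma exists_eq_expand_add_of_derivation_eq_zero (ha : a ≠ 0)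
    (hx : δ (X 0) = X 0 ^ 2 + C (a * n) * (X 0 * X 1 ^ (n - 1))) (hy : δ (X 1) = C a * X 1 ^ n)
    {f : MvPolynomial (Fin 2) k} (hf : δ f = 0) :
    ∃ f₀ g, f = expand 2 f₀ + expand 2 g * (X 0 ^ 2 * X 1 + C a * (X 0 * X 1 ^ n)) := by
  obtain ⟨f₀, f₁, f₂, f₃, rfl⟩ := exists_eq_sqCombination f
  obtain ⟨m, rfl | rfl⟩ := Nat.even_or_odd' n
  · rw [derivation_sqCombination_of_even hx hy] at hf
    obtain ⟨h₀, -, h₂, -⟩ := sqCombination_eq_zero hf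
    obtain rfl : f₃ = 0 := (mul_eq_zero.1 h₂).resolve_right (X_ne_zero 0)
    obtain ⟨g, rfl, rfl⟩ := exists_eq_X_mul_of_mul_X_eq (by decide) ha (CharTwo.add_eq_zero.1 h₀)
    refine ⟨f₀, g, ?_⟩
    simp only [sqCombination, map_mul, map_pow, expand_C, expand_X, map_zero]
    ring
  · rw [derivation_sqCombination_of_odd hx hy] at hf
    obtain ⟨h₀, -, h₂, -⟩ := sqCombination_eq_zero hf
    obtain rfl : f₁ = 0 := (mul_eq_zero.1 h₀).resolve_right (X_ne_zero 0)
    obtain ⟨g, rfl, rfl⟩ :=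
      exists_eq_X_mul_of_mul_X_eq (by decide) ha (CharTwo.add_eq_zero.1 h₂).symm
    refine ⟨f₀, g, ?_⟩
    simp only [sqCombination, map_mul, map_pow, expand_C, expand_X, map_zero]
    ring

end JacobianDerivation

theorem stmt_5_general (k : Type*) [Field k] [CharP k 2] (a : k) (ha : a ≠ 0)
    (n : ℕ)
    (δ : Derivation k (MvPolynomial (Fin 2) k) (MvPolynomial (Fin 2) k))
    (hδ : δ = mkDerivation k
      ![(X 0 : MvPolynomial (Fin 2) k) ^ 2 + C (a * (n : k)) * (X 0 * X 1 ^ (n - 1)),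
        C a * X 1 ^ n]) :
    {f : MvPolynomial (Fin 2) k | δ f = 0} =
      ↑(Algebra.adjoin k ({X 0 ^ 2, X 1 ^ 2, X 0 ^ 2 * X 1 + C a * (X 0 * X 1 ^ n)} :
          Set (MvPolynomial (Fin 2) k))) := by
  have hx : δ (X 0) = X 0 ^ 2 + C (a * n) * (X 0 * X 1 ^ (n - 1)) := by
    rw [hδ, mkDerivation_X]; rfl
  have hy : δ (X 1) = C a * X 1 ^ n := by
    rw [hδ, mkDerivation_X]; rfl
  change (δ.constants : Set (MvPolynomial (Fin 2) k)) = _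
  refine SetLike.coe_set_eq.2 (le_antisymm (fun f hf => ?_) (Algebra.adjoin_le ?_))
  · obtain ⟨f₀, g, rfl⟩ := exists_eq_expand_add_of_derivation_eq_zero ha hx hy hf
    have hE : Algebra.adjoin k (Set.range fun i => (X i : MvPolynomial (Fin 2) k) ^ 2) ≤
        Algebra.adjoin k {X 0 ^ 2, X 1 ^ 2, X 0 ^ 2 * X 1 + C a * (X 0 * X 1 ^ n)} := by
      refine Algebra.adjoin_mono ?_
      rintro _ ⟨i, rfl⟩
      fin_cases i <;> simp
    exact add_mem (hE (expand_mem_adjoin_range_X_pow 2 f₀))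
      (mul_mem (hE (expand_mem_adjoin_range_X_pow 2 g)) (Algebra.subset_adjoin (by simp)))
  · rintro _ (rfl | rfl | rfl)
    · exact δ.map_sq_eq_zero_of_charTwo _
    · exact δ.map_sq_eq_zero_of_charTwo _
    · exact derivation_X_sq_mul_X_add_C_mul_eq_zero hx hy

/-- For a ≠ 0, n ≥ 2 and δ = (x² + a·n·x·y^{n-1})·∂/∂x + a·yⁿ·∂/∂y,
the kernel of δ equals the k-subalgebra generated by x², y², x²y + axyⁿ. -/
theorem stmt_5 (k : Type*) [Field k] [IsAlgClosed k] [CharP k 2] (a : k) (ha : a ≠ 0)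
    (n : ℕ) (hn : 2 ≤ n)
    (δ : Derivation k (MvPolynomial (Fin 2) k) (MvPolynomial (Fin 2) k))
    (hδ : δ = mkDerivation k
      ![(X 0 : MvPolynomial (Fin 2) k) ^ 2 + C (a * (n : k)) * (X 0 * X 1 ^ (n - 1)),
        C a * X 1 ^ n]) :
    {f : MvPolynomial (Fin 2) k | δ f = 0} =
      ↑(Algebra.adjoin k ({X 0 ^ 2, X 1 ^ 2, X 0 ^ 2 * X 1 + C a * (X 0 * X 1 ^ n)} :
          Set (MvPolynomial (Fin 2) k))) :=
  stmt_5_general k a ha n δ hδ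
end

section
/- Let a ∈ k be nonzero and let δ be the k-derivation xy²·∂/∂x + (ax² + y³)·∂/∂y of k[x,y]. Then the composition δ ∘ δ, as a k-linear endomorphism of k[x,y], equals y²·δ, i.e. the map sending f to y²·δ(f). In particular δ is 2-closed. -/
/-!
In characteristic 2 the square of a derivation of `k[x,y]` is again a derivation, so
`δ ∘ δ = y² • δ` only has to be checked on `x` and `y`, where it is a short computation.
-/

open MvPolynomial

namespace Derivation

variable {R A : Type*} [CommSemiring R] [CommRing A] [Algebra R A] [CharP A 2]

/-- `D ∘ D` satisfies the Leibniz rule because the cross term `2 • D a • D b` vanishes. -/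
def compSelfOfCharTwo (D : Derivation R A A) : Derivation R A A where
  toLinearMap := D.toLinearMap ∘ₗ D.toLinearMap
  map_one_eq_zero' := by simp
  leibniz' a b := by
    have two : (2 : A) = 0 := CharTwo.two_eq_zero
    simp only [LinearMap.comp_apply, coeFn_coe, leibniz, smul_eq_mul, map_add]
    linear_combination D a * D b * two

@[simp]
theorem compSelfOfCharTwo_apply (D : Derivation R A A) (a : A) :
    D.compSelfOfCharTwo a = D (D a) :=
  rfl

end Derivation

theorem MvPolynomial.derivation_apply_apply_eq_mul_of_charTwo {σ R : Type*} [CommRing R]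
    [CharP R 2] {D : Derivation R (MvPolynomial σ R) (MvPolynomial σ R)} {h : MvPolynomial σ R}
    (hX : ∀ i, D (D (X i)) = h * D (X i)) (f : MvPolynomial σ R) : D (D f) = h * D f := by
  have : D.compSelfOfCharTwo = h • D := derivation_ext fun i => by simpa using hX i
  simpa using congr($this f)

theorem stmt_7_general (k : Type*) [Field k] [CharP k 2] (a : k)
    (δ : Derivation k (MvPolynomial (Fin 2) k) (MvPolynomial (Fin 2) k))
    (hδ : δ = mkDerivation k
      ![(X 0 : MvPolynomial (Fin 2) k) * X 1 ^ 2, C a * X 0 ^ 2 + X 1 ^ 3]) :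
    (∀ f : MvPolynomial (Fin 2) k, δ (δ f) = X 1 ^ 2 * δ f) ∧
      ∃ h : MvPolynomial (Fin 2) k, ∀ f : MvPolynomial (Fin 2) k, δ (δ f) = h * δ f := by
  have hx : δ (X 0) = X 0 * X 1 ^ 2 := by simp [hδ, mkDerivation_X]
  have hy : δ (X 1) = C a * X 0 ^ 2 + X 1 ^ 3 := by simp [hδ, mkDerivation_X]
  have hC : δ (C a) = 0 := δ.map_algebraMap a
  have two : (2 : MvPolynomial (Fin 2) k) = 0 := CharTwo.two_eq_zero
  have main : ∀ f, δ (δ f) = X 1 ^ 2 * δ f := by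
    refine derivation_apply_apply_eq_mul_of_charTwo fun i => ?_
    fin_cases i
    · simp [hx, hy, Derivation.leibniz, Derivation.leibniz_pow, two]
    · simp only [Fin.mk_one, Fin.isValue, hy, map_add, Derivation.leibniz, Derivation.leibniz_pow,
        Nat.add_one_sub_one, pow_one, hx, smul_eq_mul, nsmul_eq_mul, Nat.cast_ofNat, hC, mul_zero,
        add_zero]
      linear_combination (2 * C a * X 0 ^ 2 * X 1 ^ 2 + X 1 ^ 5) * two
  exact ⟨main, _, main⟩

/-- For a ≠ 0 and δ = xy²·∂/∂x + (ax² + y³)·∂/∂y, the composite δ ∘ δ equals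
the map f ↦ y²·δ(f); in particular δ is 2-closed. -/
theorem stmt_7 (k : Type*) [Field k] [IsAlgClosed k] [CharP k 2] (a : k) (ha : a ≠ 0)
    (δ : Derivation k (MvPolynomial (Fin 2) k) (MvPolynomial (Fin 2) k))
    (hδ : δ = mkDerivation k
      ![(X 0 : MvPolynomial (Fin 2) k) * X 1 ^ 2, C a * X 0 ^ 2 + X 1 ^ 3]) :
    (∀ f : MvPolynomial (Fin 2) k, δ (δ f) = X 1 ^ 2 * δ f) ∧
      ∃ h : MvPolynomial (Fin 2) k, ∀ f : MvPolynomial (Fin 2) k, δ (δ f) = h * δ f :=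
  stmt_7_general k a δ hδ
end

section
/- Let a ∈ k be nonzero and let δ be the k-derivation y⁴·∂/∂x + ax²·∂/∂y of k[x,y]. Then x², y² and ax³ + y⁵ all lie in the kernel of δ, and the k-subalgebra of k[x,y] generated by x², y² and ax³ + y⁵ is isomorphic, as a k-algebra, to k[X,Y,Z]/(Z² + a²X³ + Y⁵). -/
/-!
Let `φ : k[X,Y,Z] → k[x,y]` send `X, Y, Z` to `x², y², ax³ + y⁵`; its image is the subalgebra in
question and the relation `Z² + a²X³ + Y⁵` lies in its kernel because squaring is additive in
characteristic 2. Dividing by this relation, which is monic of degree 2 in `Z`, every polynomial is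
congruent to `p(X,Y) Z + q(X,Y)`, with image `p(x²,y²)(ax³ + y⁵) + q(x²,y²)`. The derivation `∂/∂y`
kills all polynomials in `x², y²` and sends `ax³ + y⁵` to `y⁴`, so if this image vanishes then
`p(x²,y²) y⁴ = 0`, hence `p = 0` and then `q = 0`.
-/

open MvPolynomial

theorem Derivation.map_pow_eq_zero_of_charP {R A M : Type*} [CommSemiring R] [CommSemiring A]
    [Algebra R A] [AddCommMonoid M] [Module A M] [Module R M] [IsScalarTower R A M]
    (D : Derivation R A M) (p : ℕ) [CharP A p] (f : A) : D (f ^ p) = 0 := by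
  rw [Derivation.leibniz_pow, ← Nat.cast_smul_eq_nsmul A, CharP.cast_eq_zero, zero_smul]

namespace MvPolynomial

theorem derivation_expand_eq_zero {σ R M : Type*} [CommSemiring R] [AddCommMonoid M]
    [Module (MvPolynomial σ R) M] [Module R M] [IsScalarTower R (MvPolynomial σ R) M]
    (p : ℕ) [CharP R p] (D : Derivation R (MvPolynomial σ R) M) (f : MvPolynomial σ R) :
    D (expand p f) = 0 := by
  induction f using MvPolynomial.induction_on with
  | C r => simp
  | add f g hf hg => rw [map_add, map_add, hf, hg, add_zero]
  | mul_X f i hf =>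
    rw [map_mul, expand_X, Derivation.leibniz, hf, D.map_pow_eq_zero_of_charP p _, smul_zero,
      smul_zero, add_zero]

theorem eq_zero_of_expand_add_expand_mul_eq_zero {σ R : Type*} [CommRing R] [IsDomain R]
    {p : ℕ} (hp : 0 < p) [CharP R p] {g : MvPolynomial σ R} {i : σ} (hg : pderiv i g ≠ 0)
    {q r : MvPolynomial σ R} (h : expand p q + expand p r * g = 0) : r = 0 ∧ q = 0 := by
  have hr : expand p r * pderiv i g = 0 := by
    simpa [Derivation.leibniz, derivation_expand_eq_zero] using congrArg (pderiv i) h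
  have hr : r = 0 := (expand_eq_zero hp).1 ((mul_eq_zero.1 hr).resolve_right hg)
  refine ⟨hr, (expand_eq_zero hp).1 ?_⟩
  simpa [hr] using h

theorem exists_eq_mul_add_mul_X_last_add {R : Type*} [CommRing R] {n : ℕ}
    (g : MvPolynomial (Fin n) R) (f : MvPolynomial (Fin (n + 1)) R) :
    ∃ h p q, f = (X (Fin.last n) ^ 2 + rename Fin.castSucc g) * h +
      rename Fin.castSucc p * X (Fin.last n) + rename Fin.castSucc q := by
  induction f using MvPolynomial.induction_on with
  | C r => exact ⟨0, 0, C r, by simp⟩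
  | add f f' hf hf' =>
    obtain ⟨h, p, q, rfl⟩ := hf
    obtain ⟨h', p', q', rfl⟩ := hf'
    exact ⟨h + h', p + p', q + q', by simp only [map_add]; ring⟩
  | mul_X f i hf =>
    obtain ⟨h, p, q, rfl⟩ := hf
    induction i using Fin.lastCases with
    | last =>
      exact ⟨h * X (Fin.last n) + rename Fin.castSucc p, q, -g * p,
        by simp only [map_mul, map_neg]; ring⟩
    | cast j =>
      exact ⟨h * X j.castSucc, p * X j, q * X j, by simp only [map_mul, rename_X]; ring⟩

end MvPolynomial

section CuspidalPlaneCurve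

variable {k : Type*} [Field k] (a : k)

noncomputable def generatorsHom : MvPolynomial (Fin 3) k →ₐ[k] MvPolynomial (Fin 2) k :=
  aeval ![X 0 ^ 2, X 1 ^ 2, C a * X 0 ^ 3 + X 1 ^ 5]

theorem generatorsHom_rename_castSucc (p : MvPolynomial (Fin 2) k) :
    generatorsHom a (rename Fin.castSucc p) = expand 2 p := by
  rw [generatorsHom, aeval_rename, expand, ← aeval_eq_bind₁]
  congr 2
  funext i
  fin_cases i <;> rfl

theorem range_generatorsHom :
    (generatorsHom a).range = Algebra.adjoin k
      ({X 0 ^ 2, X 1 ^ 2, C a * X 0 ^ 3 + X 1 ^ 5} : Set (MvPolynomial (Fin 2) k)) := by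
  rw [generatorsHom, ← Algebra.adjoin_range_eq_range_aeval]
  congr 1
  ext x
  constructor
  · rintro ⟨i, rfl⟩
    fin_cases i <;> simp
  · rintro (rfl | rfl | rfl)
    exacts [⟨0, rfl⟩, ⟨1, rfl⟩, ⟨2, rfl⟩]

theorem ker_generatorsHom [CharP k 2] :
    RingHom.ker (generatorsHom a) =
      Ideal.span {(X 2 : MvPolynomial (Fin 3) k) ^ 2 + C (a ^ 2) * X 0 ^ 3 + X 1 ^ 5} := by
  set g : MvPolynomial (Fin 2) k := C (a ^ 2) * X 0 ^ 3 + X 1 ^ 5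
  have hrel : (X 2 : MvPolynomial (Fin 3) k) ^ 2 + C (a ^ 2) * X 0 ^ 3 + X 1 ^ 5 =
      X (Fin.last 2) ^ 2 + rename Fin.castSucc g := by
    simp [g]; ring
  have hX2 : generatorsHom a (X (Fin.last 2)) = C a * X 0 ^ 3 + X 1 ^ 5 := by
    simp [generatorsHom]
  have hrel_mem : X (Fin.last 2) ^ 2 + rename Fin.castSucc g ∈ RingHom.ker (generatorsHom a) := by
    rw [RingHom.mem_ker, map_add, map_pow, hX2, generatorsHom_rename_castSucc]
    simp only [g, map_add, map_mul, map_pow, expand_C, expand_X]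
    linear_combination (C a * X 0 ^ 3 * X 1 ^ 5 + C a ^ 2 * X 0 ^ 6 + X 1 ^ 10) *
      CharTwo.two_eq_zero (R := MvPolynomial (Fin 2) k)
  rw [hrel]
  refine le_antisymm (fun f hf ↦ ?_) ((Ideal.span_singleton_le_iff_mem _).2 hrel_mem)
  obtain ⟨h, p, q, rfl⟩ := exists_eq_mul_add_mul_X_last_add g f
  have hpq : expand 2 q + expand 2 p * (C a * X 0 ^ 3 + X 1 ^ 5) = 0 := by
    rw [RingHom.mem_ker, map_add, map_add, map_mul, map_mul, RingHom.mem_ker.1 hrel_mem,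
      generatorsHom_rename_castSucc, generatorsHom_rename_castSucc, hX2] at hf
    linear_combination hf
  have hderiv : pderiv 1 (C a * X 0 ^ 3 + X 1 ^ 5 : MvPolynomial (Fin 2) k) ≠ 0 := by
    have h5 : (5 : MvPolynomial (Fin 2) k) = 1 := by
      linear_combination 2 * CharTwo.two_eq_zero (R := MvPolynomial (Fin 2) k)
    simp [Derivation.leibniz_pow, pderiv_X, h5]
  obtain ⟨rfl, rfl⟩ := eq_zero_of_expand_add_expand_mul_eq_zero two_pos hderiv hpq
  simpa using Ideal.mul_mem_right h _ (Ideal.mem_span_singleton_self _)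

end CuspidalPlaneCurve

theorem stmt_10_general (k : Type*) [Field k] [CharP k 2] (a : k)
    (δ : Derivation k (MvPolynomial (Fin 2) k) (MvPolynomial (Fin 2) k))
    (hδ : δ = mkDerivation k
      ![(X 1 : MvPolynomial (Fin 2) k) ^ 4, C a * X 0 ^ 2]) :
    δ ((X 0 : MvPolynomial (Fin 2) k) ^ 2) = 0 ∧
    δ ((X 1 : MvPolynomial (Fin 2) k) ^ 2) = 0 ∧
    δ (C a * (X 0 : MvPolynomial (Fin 2) k) ^ 3 + X 1 ^ 5) = 0 ∧
    Nonempty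
      ((Algebra.adjoin k ({X 0 ^ 2, X 1 ^ 2, C a * X 0 ^ 3 + X 1 ^ 5} :
          Set (MvPolynomial (Fin 2) k))) ≃ₐ[k]
        (MvPolynomial (Fin 3) k ⧸
          Ideal.span {(X 2 : MvPolynomial (Fin 3) k) ^ 2 + C (a ^ 2) * X 0 ^ 3 + X 1 ^ 5})) := by
  refine ⟨δ.map_pow_eq_zero_of_charP 2 _, δ.map_pow_eq_zero_of_charP 2 _, ?_, ?_⟩
  · subst hδ
    simp only [Derivation.leibniz, Derivation.leibniz_pow, mkDerivation_X, map_add, smul_eq_mul,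
      nsmul_eq_mul, derivation_C, Matrix.cons_val_zero, Matrix.cons_val_one]
    linear_combination
      4 * C a * X 0 ^ 2 * X 1 ^ 4 * CharTwo.two_eq_zero (R := MvPolynomial (Fin 2) k)
  · exact ⟨((Ideal.quotientEquivAlgOfEq k (ker_generatorsHom a)).symm.trans
      ((Ideal.quotientKerEquivRange (generatorsHom a)).trans
        (Subalgebra.equivOfEq _ _ (range_generatorsHom a)))).symm⟩

/-- For a ≠ 0 and δ = y⁴·∂/∂x + ax²·∂/∂y, the elements x², y², ax³ + y⁵ lie in
the kernel of δ, and k[x², y², ax³ + y⁵] ≅ k[X,Y,Z]/(Z² + a²X³ + Y⁵). -/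
theorem stmt_10 (k : Type*) [Field k] [IsAlgClosed k] [CharP k 2] (a : k) (ha : a ≠ 0)
    (δ : Derivation k (MvPolynomial (Fin 2) k) (MvPolynomial (Fin 2) k))
    (hδ : δ = mkDerivation k
      ![(X 1 : MvPolynomial (Fin 2) k) ^ 4, C a * X 0 ^ 2]) :
    δ ((X 0 : MvPolynomial (Fin 2) k) ^ 2) = 0 ∧
    δ ((X 1 : MvPolynomial (Fin 2) k) ^ 2) = 0 ∧
    δ (C a * (X 0 : MvPolynomial (Fin 2) k) ^ 3 + X 1 ^ 5) = 0 ∧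
    Nonempty
      ((Algebra.adjoin k ({X 0 ^ 2, X 1 ^ 2, C a * X 0 ^ 3 + X 1 ^ 5} :
          Set (MvPolynomial (Fin 2) k))) ≃ₐ[k]
        (MvPolynomial (Fin 3) k ⧸
          Ideal.span {(X 2 : MvPolynomial (Fin 3) k) ^ 2 + C (a ^ 2) * X 0 ^ 3 + X 1 ^ 5})) :=
  stmt_10_general k a δ hδ
end

section
/- Let F = a₃₀x³ + a₂₁x²y + a₁₂xy² + a₂₀x² + a₁₁xy + a₀₂y² + a₁₀x + a₀₁y and G = a₃₀x²y + a₂₁xy² + a₁₂y³ + b₂₀x² + b₁₁xy + b₀₂y² + b₁₀x + b₀₁y in k[x,y], with coefficients in k. Assume F ≠ 0, G ≠ 0, that F and G have no common (non-unit) factor, and that there exists H ∈ k[x,y] with F·F_x + G·F_y = H·F and F·G_x + G·G_y = H·G, where subscripts denote partial derivatives. Then a₂₁ = a₁₁ = a₀₁ = b₁₁ = b₁₀ = 0 and a₁₀ = b₀₁. -/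
/-!
The first relation gives `G * F_y = F * (H - F_x)`, so coprimality forces `F ∣ F_y`; since
differentiation lowers the total degree, this means `F_y = 0`, and symmetrically `G_x = 0`. In
characteristic 2 these read `a₂₁x² + a₁₁x + a₀₁ = 0` and `a₂₁y² + b₁₁y + b₁₀ = 0`. The relations
then say `F_x = H = G_y`, while in characteristic 2 `F_x - G_y = a₁₁y - b₁₁x + (a₁₀ - b₀₁)`.
-/

open MvPolynomial

namespace MvPolynomial

variable {σ R : Type*}

theorem totalDegree_pderiv_lt [CommSemiring R] {p : MvPolynomial σ R} {i : σ}
    (h : pderiv i p ≠ 0) : (pderiv i p).totalDegree < p.totalDegree := by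
  obtain ⟨m, hm, hdeg⟩ := Finset.exists_mem_eq_sup _ (support_nonempty.2 h)
    (fun s : σ →₀ ℕ => s.sum fun _ e => e)
  have hmi : m + Finsupp.single i 1 ∈ p.support := by
    rw [mem_support_iff, coeff_pderiv] at hm
    exact mem_support_iff.2 (left_ne_zero_of_mul hm)
  calc (pderiv i p).totalDegree = m.sum (fun _ e => e) := hdeg
    _ < (m + Finsupp.single i 1).sum (fun _ e => e) := by
      rw [Finsupp.sum_add_index' (fun _ => rfl) (fun _ _ _ => rfl)]
      simp
    _ ≤ p.totalDegree := le_totalDegree hmi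

theorem pderiv_eq_zero_of_dvd_pderiv [CommRing R] [IsDomain R] {p : MvPolynomial σ R} {i : σ}
    (h : p ∣ pderiv i p) : pderiv i p = 0 := by
  by_contra h0
  exact (totalDegree_pderiv_lt h0).not_ge (totalDegree_le_of_dvd_of_isDomain h h0)

theorem C_mul_X_sq_add_C_mul_X_add_C_eq_zero [CommSemiring R] {i : σ} {a b c : R}
    (h : C a * X i ^ 2 + C b * X i + C c = (0 : MvPolynomial σ R)) :
    a = 0 ∧ b = 0 ∧ c = 0 := by
  classical
  have h2 := congrArg (coeff (Finsupp.single i 2)) h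
  have h1 := congrArg (coeff (Finsupp.single i 1)) h
  have h0 := congrArg (coeff 0) h
  simpa [coeff_X_pow, coeff_X, coeff_C, Finsupp.single_eq_single_iff,
    eq_comm (a := (0 : σ →₀ ℕ))] using And.intro h2 (And.intro h1 h0)

end MvPolynomial

theorem IsRelPrime.dvd_of_mul_add_mul_eq_mul {R : Type*} [CommRing R] [DecompositionMonoid R]
    {F G H a b : R} (hFG : IsRelPrime F G) (h : F * a + G * b = H * F) : F ∣ b :=
  hFG.dvd_of_dvd_mul_left ⟨H - a, by linear_combination h⟩

theorem stmt_12_general (k : Type*) [Field k] [CharP k 2]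
    (a30 a21 a12 a20 a11 a02 a10 a01 b20 b11 b02 b10 b01 : k)
    (F G : MvPolynomial (Fin 2) k)
    (hF : F = C a30 * X 0 ^ 3 + C a21 * (X 0 ^ 2 * X 1) + C a12 * (X 0 * X 1 ^ 2) +
        C a20 * X 0 ^ 2 + C a11 * (X 0 * X 1) + C a02 * X 1 ^ 2 + C a10 * X 0 + C a01 * X 1)
    (hG : G = C a30 * (X 0 ^ 2 * X 1) + C a21 * (X 0 * X 1 ^ 2) + C a12 * X 1 ^ 3 +
        C b20 * X 0 ^ 2 + C b11 * (X 0 * X 1) + C b02 * X 1 ^ 2 + C b10 * X 0 + C b01 * X 1)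
    (hF0 : F ≠ 0) (hG0 : G ≠ 0)
    (hcoprime : ∀ d : MvPolynomial (Fin 2) k, d ∣ F → d ∣ G → IsUnit d)
    (H : MvPolynomial (Fin 2) k)
    (h1 : F * pderiv 0 F + G * pderiv 1 F = H * F)
    (h2 : F * pderiv 0 G + G * pderiv 1 G = H * G) :
    a21 = 0 ∧ a11 = 0 ∧ a01 = 0 ∧ b11 = 0 ∧ b10 = 0 ∧ a10 = b01 := by
  have h2k : (2 : MvPolynomial (Fin 2) k) = 0 := CharTwo.two_eq_zero
  have hFy : pderiv 1 F = C a21 * X 0 ^ 2 + C a11 * X 0 + C a01 := by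
    simp only [hF, map_add, pderiv_mul, pderiv_C, pderiv_X_self, pderiv_pow,
      pderiv_X_of_ne (by decide : (0 : Fin 2) ≠ 1), Nat.cast_ofNat]
    linear_combination (C a12 * X 0 * X 1 + C a02 * X 1) * h2k
  have hGx : pderiv 0 G = C a21 * X 1 ^ 2 + C b11 * X 1 + C b10 := by
    simp only [hG, map_add, pderiv_mul, pderiv_C, pderiv_X_self, pderiv_pow,
      pderiv_X_of_ne (by decide : (1 : Fin 2) ≠ 0), Nat.cast_ofNat]
    linear_combination (C a30 * X 0 * X 1 + C b20 * X 0) * h2k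
  have hFx_sub_Gy : pderiv 0 F - pderiv 1 G = C a11 * X 1 - C b11 * X 0 + C (a10 - b01) := by
    simp only [hF, hG, map_add, pderiv_mul, pderiv_C, pderiv_X_self, pderiv_pow, C_sub,
      pderiv_X_of_ne (by decide : (0 : Fin 2) ≠ 1), pderiv_X_of_ne (by decide : (1 : Fin 2) ≠ 0),
      Nat.cast_ofNat]
    linear_combination (C a30 * X 0 ^ 2 - C a12 * X 1 ^ 2 + C a20 * X 0 - C b02 * X 1) * h2k
  have hrel : IsRelPrime F G := hcoprime
  have h2' : G * pderiv 1 G + F * pderiv 0 G = H * G := by linear_combination h2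
  have hFy0 : pderiv 1 F = 0 := pderiv_eq_zero_of_dvd_pderiv (hrel.dvd_of_mul_add_mul_eq_mul h1)
  have hGx0 : pderiv 0 G = 0 := pderiv_eq_zero_of_dvd_pderiv (hrel.symm.dvd_of_mul_add_mul_eq_mul h2')
  obtain ⟨ha21, ha11, ha01⟩ := C_mul_X_sq_add_C_mul_X_add_C_eq_zero (hFy ▸ hFy0)
  obtain ⟨-, hb11, hb10⟩ := C_mul_X_sq_add_C_mul_X_add_C_eq_zero (hGx ▸ hGx0)
  have hFx : pderiv 0 F = H := mul_left_cancel₀ hF0 (by linear_combination h1 - G * hFy0)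
  have hGy : pderiv 1 G = H := mul_left_cancel₀ hG0 (by linear_combination h2 - F * hGx0)
  have hC : C (a10 - b01) = (0 : MvPolynomial (Fin 2) k) := by
    simpa [ha11, hb11, hFx, hGy] using hFx_sub_Gy.symm
  exact ⟨ha21, ha11, ha01, hb11, hb10, sub_eq_zero.1 (C_eq_zero.1 hC)⟩

/-- If F = a₃₀x³ + a₂₁x²y + a₁₂xy² + a₂₀x² + a₁₁xy + a₀₂y² + a₁₀x + a₀₁y and
G = a₃₀x²y + a₂₁xy² + a₁₂y³ + b₂₀x² + b₁₁xy + b₀₂y² + b₁₀x + b₀₁y are nonzero, have no common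
non-unit factor, and F·F_x + G·F_y = H·F, F·G_x + G·G_y = H·G for some H, then
a₂₁ = a₁₁ = a₀₁ = b₁₁ = b₁₀ = 0 and a₁₀ = b₀₁. -/
theorem stmt_12 (k : Type*) [Field k] [IsAlgClosed k] [CharP k 2]
    (a30 a21 a12 a20 a11 a02 a10 a01 b20 b11 b02 b10 b01 : k)
    (F G : MvPolynomial (Fin 2) k)
    (hF : F = C a30 * X 0 ^ 3 + C a21 * (X 0 ^ 2 * X 1) + C a12 * (X 0 * X 1 ^ 2) +
        C a20 * X 0 ^ 2 + C a11 * (X 0 * X 1) + C a02 * X 1 ^ 2 + C a10 * X 0 + C a01 * X 1)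
    (hG : G = C a30 * (X 0 ^ 2 * X 1) + C a21 * (X 0 * X 1 ^ 2) + C a12 * X 1 ^ 3 +
        C b20 * X 0 ^ 2 + C b11 * (X 0 * X 1) + C b02 * X 1 ^ 2 + C b10 * X 0 + C b01 * X 1)
    (hF0 : F ≠ 0) (hG0 : G ≠ 0)
    (hcoprime : ∀ d : MvPolynomial (Fin 2) k, d ∣ F → d ∣ G → IsUnit d)
    (H : MvPolynomial (Fin 2) k)
    (h1 : F * pderiv 0 F + G * pderiv 1 F = H * F)
    (h2 : F * pderiv 0 G + G * pderiv 1 G = H * G) :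
    a21 = 0 ∧ a11 = 0 ∧ a01 = 0 ∧ b11 = 0 ∧ b10 = 0 ∧ a10 = b01 :=
  stmt_12_general k a30 a21 a12 a20 a11 a02 a10 a01 b20 b11 b02 b10 b01 F G hF hG hF0 hG0 hcoprime H
    h1 h2
end

section
/- Let b, c ∈ k be nonzero. Then k[[X,Y,Z]]/(Z² + (Y+b)X³ + cXY³) is isomorphic, as a k-algebra, to k[[X,Y,Z]]/(Z² + X³ + XY³). -/
/-!
Choose `γ` with `γ³ = c`. The substitution `X ↦ X/(Y+b)`, `Y ↦ γY/(Y+b)`, `Z ↦ Z/(Y+b)²` sends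
the `E₇` equation `Z² + X³ + XY³` to `(Y+b)⁻⁴ (Z² + (Y+b)X³ + cXY³)`, so it matches the two
principal ideals. It is an automorphism of `k[[X,Y,Z]]` because `Y ↦ γY/(Y+b)` is a Möbius
transformation, with inverse `Y ↦ bY/(γ-Y)`; this yields the inverse substitution in closed form.
-/

open MvPowerSeries

namespace MvPowerSeries

variable {σ τ : Type*}

noncomputable def substAlgEquiv {R : Type*} [CommRing R] {a : σ → MvPowerSeries τ R}
    {b : τ → MvPowerSeries σ R} (ha : HasSubst a) (hb : HasSubst b)
    (hba : ∀ s, subst b (a s) = X s) (hab : ∀ t, subst a (b t) = X t) :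
    MvPowerSeries σ R ≃ₐ[R] MvPowerSeries τ R :=
  AlgEquiv.ofAlgHom (substAlgHom ha) (substAlgHom hb)
    (AlgHom.ext fun f => by simp [subst_comp_subst_apply hb ha, hab, subst_self])
    (AlgHom.ext fun f => by simp [subst_comp_subst_apply ha hb, hba, subst_self])

@[simp]
lemma coe_substAlgEquiv {R : Type*} [CommRing R] {a : σ → MvPowerSeries τ R}
    {b : τ → MvPowerSeries σ R} (ha : HasSubst a) (hb : HasSubst b)
    (hba : ∀ s, subst b (a s) = X s) (hab : ∀ t, subst a (b t) = X t) :
    ⇑(substAlgEquiv ha hb hba hab) = subst a :=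
  coe_substAlgHom ha

lemma subst_inv_mul_subst {k : Type*} [Field k] {a : σ → MvPowerSeries τ k} (ha : HasSubst a)
    {f : MvPowerSeries σ k} (hf : constantCoeff f ≠ 0) : subst a f⁻¹ * subst a f = 1 := by
  rw [← subst_mul ha, MvPowerSeries.inv_mul_cancel f hf, ← map_one C, subst_C, map_one]

end MvPowerSeries

noncomputable def Ideal.quotientSpanSingletonAlgEquiv {R A B : Type*} [CommSemiring R]
    [CommRing A] [CommRing B] [Algebra R A] [Algebra R B] (e : A ≃ₐ[R] B) {x : A} {y u : B}
    (hu : IsUnit u) (h : e x = u * y) :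
    (A ⧸ Ideal.span {x}) ≃ₐ[R] (B ⧸ Ideal.span {y}) :=
  Ideal.quotientEquivAlg _ _ e (by
    rw [Ideal.map_span, Set.image_singleton]
    change _ = Ideal.span {e x}
    rw [h, Ideal.span_singleton_mul_left_unit hu])

section
variable {k : Type*} [Field k] (b γ : k)

noncomputable def scaleSubst : Fin 3 → MvPowerSeries (Fin 3) k :=
  ![(X 1 + C b)⁻¹ * X 0, C γ * (X 1 + C b)⁻¹ * X 1, ((X 1 + C b)⁻¹) ^ 2 * X 2]

noncomputable def scaleSubstInv : Fin 3 → MvPowerSeries (Fin 3) k :=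
  ![C b * C γ * (C γ - X 1)⁻¹ * X 0, C b * (C γ - X 1)⁻¹ * X 1,
    (C b * C γ * (C γ - X 1)⁻¹) ^ 2 * X 2]

lemma hasSubst_scaleSubst : HasSubst (scaleSubst b γ) :=
  hasSubst_of_constantCoeff_zero fun s => by fin_cases s <;> simp [scaleSubst]

lemma hasSubst_scaleSubstInv : HasSubst (scaleSubstInv b γ) :=
  hasSubst_of_constantCoeff_zero fun s => by fin_cases s <;> simp [scaleSubstInv]

variable {b γ}

lemma subst_scaleSubst_scaleSubstInv (hb : b ≠ 0) (hγ : γ ≠ 0) (s : Fin 3) :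
    subst (scaleSubst b γ) (scaleSubstInv b γ s) = X s := by
  have ha := hasSubst_scaleSubst b γ
  have he := MvPowerSeries.inv_mul_cancel (X 1 + C b : MvPowerSeries (Fin 3) k)
    (by simpa using hb)
  have hW := subst_inv_mul_subst ha (f := C γ - X 1) (by simpa using hγ)
  generalize hW_def : subst (scaleSubst b γ) (C γ - X 1 : MvPowerSeries (Fin 3) k)⁻¹ = W at hW
  simp only [subst_sub ha, subst_C, subst_X ha] at hW
  simp only [scaleSubst, Matrix.cons_val] at hW
  have hK : C b * C γ * W * (X 1 + C b)⁻¹ = 1 := by linear_combination hW + W * C γ * he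
  fin_cases s <;> simp [scaleSubstInv, subst_mul ha, subst_pow ha, subst_X ha, hW_def] <;>
    simp only [scaleSubst, Matrix.cons_val]
  · linear_combination X 0 * hK
  · linear_combination X 1 * hK
  · linear_combination X 2 * (C b * C γ * W * (X 1 + C b)⁻¹ + 1) * hK

lemma subst_scaleSubstInv_scaleSubst (hb : b ≠ 0) (hγ : γ ≠ 0) (s : Fin 3) :
    subst (scaleSubstInv b γ) (scaleSubst b γ s) = X s := by
  have ha := hasSubst_scaleSubstInv b γ
  have hw := MvPowerSeries.inv_mul_cancel (C γ - X 1 : MvPowerSeries (Fin 3) k)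
    (by simpa using hγ)
  have hE := subst_inv_mul_subst ha (f := X 1 + C b) (by simpa using hb)
  generalize hE_def :
    subst (scaleSubstInv b γ) (X 1 + C b : MvPowerSeries (Fin 3) k)⁻¹ = E at hE
  simp only [subst_add ha, subst_C, subst_X ha] at hE
  simp only [scaleSubstInv, Matrix.cons_val] at hE
  have hK : E * (C b * C γ * (C γ - X 1)⁻¹) = 1 := by
    linear_combination hE + E * C b * hw
  fin_cases s <;> simp [scaleSubst, subst_mul ha, subst_pow ha, subst_X ha, hE_def] <;>
    simp only [scaleSubstInv, Matrix.cons_val]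
  · linear_combination X 0 * hK
  · linear_combination X 1 * hK
  · linear_combination X 2 * (E * (C b * C γ * (C γ - X 1)⁻¹) + 1) * hK

noncomputable def scaleEquiv (hb : b ≠ 0) (hγ : γ ≠ 0) :
    MvPowerSeries (Fin 3) k ≃ₐ[k] MvPowerSeries (Fin 3) k :=
  substAlgEquiv (hasSubst_scaleSubst b γ) (hasSubst_scaleSubstInv b γ)
    (subst_scaleSubstInv_scaleSubst hb hγ) (subst_scaleSubst_scaleSubstInv hb hγ)

lemma scaleEquiv_E7 (hb : b ≠ 0) (hγ : γ ≠ 0) :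
    scaleEquiv hb hγ (X 2 ^ 2 + X 0 ^ 3 + X 0 * X 1 ^ 3) =
      (X 1 + C b)⁻¹ ^ 4 * (X 2 ^ 2 + (X 1 + C b) * X 0 ^ 3 + C (γ ^ 3) * (X 0 * X 1 ^ 3)) := by
  have ha := hasSubst_scaleSubst b γ
  have he := MvPowerSeries.inv_mul_cancel (X 1 + C b : MvPowerSeries (Fin 3) k)
    (by simpa using hb)
  simp only [scaleEquiv, coe_substAlgEquiv, subst_add ha, subst_mul ha, subst_pow ha, subst_X ha]
  simp only [scaleSubst, Matrix.cons_val, map_pow]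
  linear_combination (-(X 1 + C b)⁻¹ ^ 3 * X 0 ^ 3) * he

end

theorem stmt_15_general (k : Type*) [Field k] [IsAlgClosed k] (b c : k)
    (hb : b ≠ 0) (hc : c ≠ 0) :
    Nonempty
      ((MvPowerSeries (Fin 3) k ⧸
          Ideal.span {(X 2 : MvPowerSeries (Fin 3) k) ^ 2 +
            (X 1 + (MvPowerSeries.C : k →+* MvPowerSeries (Fin 3) k) b) * X 0 ^ 3 +
            (MvPowerSeries.C : k →+* MvPowerSeries (Fin 3) k) c * (X 0 * X 1 ^ 3)}) ≃ₐ[k]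
        (MvPowerSeries (Fin 3) k ⧸
          Ideal.span {(X 2 : MvPowerSeries (Fin 3) k) ^ 2 + X 0 ^ 3 + X 0 * X 1 ^ 3})) := by
  obtain ⟨γ, rfl⟩ : ∃ γ, c = γ ^ 3 :=
    (IsAlgClosed.exists_pow_nat_eq c three_pos).imp fun _ h => h.symm
  have hγ : γ ≠ 0 := by rintro rfl; exact hc (zero_pow three_ne_zero)
  have hu : IsUnit (X 1 + C b : MvPowerSeries (Fin 3) k)⁻¹ :=
    .of_mul_eq_one _ (MvPowerSeries.inv_mul_cancel _ (by simpa using hb))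
  exact ⟨(Ideal.quotientSpanSingletonAlgEquiv (scaleEquiv hb hγ) (hu.pow 4)
    (scaleEquiv_E7 hb hγ)).symm⟩

/-- For b, c ≠ 0, k[[X,Y,Z]]/(Z² + (Y+b)X³ + cXY³) ≅ k[[X,Y,Z]]/(Z² + X³ + XY³). -/
theorem stmt_15 (k : Type*) [Field k] [IsAlgClosed k] [CharP k 2] (b c : k)
    (hb : b ≠ 0) (hc : c ≠ 0) :
    Nonempty
      ((MvPowerSeries (Fin 3) k ⧸
          Ideal.span {(X 2 : MvPowerSeries (Fin 3) k) ^ 2 +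
            (X 1 + (MvPowerSeries.C : k →+* MvPowerSeries (Fin 3) k) b) * X 0 ^ 3 +
            (MvPowerSeries.C : k →+* MvPowerSeries (Fin 3) k) c * (X 0 * X 1 ^ 3)}) ≃ₐ[k]
        (MvPowerSeries (Fin 3) k ⧸
          Ideal.span {(X 2 : MvPowerSeries (Fin 3) k) ^ 2 + X 0 ^ 3 + X 0 * X 1 ^ 3})) :=
  stmt_15_general k b c hb hc
end

section
/- Let a ∈ k be nonzero and c ∈ k arbitrary. The k-subalgebra of k[x,y] generated by x², y² and (x+cy)³ + a(x+cy)y³ is isomorphic, as a k-algebra, to k[X,Y,Z]/(Z² + X³ + XY³). -/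
/-! Put q = x + cy and pick α with α³ = a². In characteristic 2 the k-algebra map
X ↦ q² = x² + c²y², Y ↦ αy², Z ↦ w = q³ + aqy³ has the given subalgebra as image and kills
Z² + X³ + XY³, because w² = q²(q⁴ + a²y⁶). On k[X, Y] it is injective (an invertible linear
substitution followed by `expand 2`) and its image consists of constants of ∂/∂x, whereas
∂w/∂x = q² + ay³ ≠ 0; so w satisfies no relation of degree < 2 in Z over k[X, Y], and division
by the polynomial Z² + X³ + XY³, monic in Z, shows that it generates the kernel. -/

open MvPolynomial

namespace Polynomial

variable {A B : Type*} [CommRing A] [CommRing B]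

theorem eval₂_eq_zero_iff_dvd_of_monic {φ : A →+* B} {w : B} {F : A[X]} (hF : F.Monic)
    (hFw : F.eval₂ φ w = 0)
    (hlow : ∀ p : A[X], p.degree < F.degree → p.eval₂ φ w = 0 → p = 0) (g : A[X]) :
    g.eval₂ φ w = 0 ↔ F ∣ g := by
  refine ⟨fun hg => ?_, ?_⟩
  · nontriviality A
    rw [← modByMonic_eq_zero_iff_dvd hF]
    refine hlow _ (degree_modByMonic_lt g hF) ?_
    rw [modByMonic_eq_sub_mul_div g F, eval₂_sub, eval₂_mul, hg, hFw, zero_mul, sub_zero]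
  · rintro ⟨h, rfl⟩
    rw [eval₂_mul, hFw, zero_mul]

theorem eq_zero_of_eval₂_eq_zero_of_degree_lt_two {R : Type*} [CommRing R] [IsDomain B]
    [Algebra R B] {φ : A →+* B} (hφ : Function.Injective φ) (D : Derivation R B B)
    (hD : ∀ a, D (φ a) = 0) {w : B} (hw : D w ≠ 0) {p : A[X]} (hp : p.degree < 2)
    (h : p.eval₂ φ w = 0) : p = 0 := by
  have hp1 : p.degree ≤ 1 := Order.le_of_lt_succ hp
  rw [eq_X_add_C_of_degree_le_one hp1] at h ⊢
  simp only [eval₂_add, eval₂_mul, eval₂_C, eval₂_X] at h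
  have h1 : φ (p.coeff 1) = 0 := by
    have hDh := congrArg D h
    rw [map_add, Derivation.leibniz, hD, hD, smul_zero, add_zero, map_zero, smul_eq_mul,
      add_zero] at hDh
    exact (mul_eq_zero.mp hDh).resolve_right hw
  have h0 : φ (p.coeff 0) = 0 := by rwa [h1, zero_mul, zero_add] at h
  rw [(map_eq_zero_iff φ hφ).mp h1, (map_eq_zero_iff φ hφ).mp h0, C_0, zero_mul, add_zero]

end Polynomial

theorem Derivation.map_aeval_eq_zero {R A σ : Type*} [CommRing R] [CommRing A] [Algebra R A]
    (D : Derivation R A A) {g : σ → A} (hg : ∀ i, D (g i) = 0) (p : MvPolynomial σ R) :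
    D (aeval g p) = 0 :=
  D.eqOn_adjoin (D2 := 0) (Set.forall_mem_range.mpr hg)
    (by rw [Algebra.adjoin_range_eq_range_aeval]; exact ⟨p, rfl⟩)

namespace MvPolynomial

variable (R : Type*) [CommRing R] (n : ℕ)

noncomputable def finSuccEquivLast :
    MvPolynomial (Fin (n + 1)) R ≃ₐ[R] Polynomial (MvPolynomial (Fin n) R) :=
  (renameEquiv R (finRotate (n + 1))).trans (finSuccEquiv R n)

variable {R n}

theorem finSuccEquivLast_X_castSucc (j : Fin n) :
    finSuccEquivLast R n (X j.castSucc) = Polynomial.C (X j) := by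
  simp [finSuccEquivLast, finSuccEquiv_X_succ]

theorem finSuccEquivLast_X_last : finSuccEquivLast R n (X (Fin.last n)) = Polynomial.X := by
  simp [finSuccEquivLast, finSuccEquiv_X_zero]

theorem aeval_eq_eval₂_finSuccEquivLast {S : Type*} [CommRing S] [Algebra R S]
    (f : Fin (n + 1) → S) (g : MvPolynomial (Fin (n + 1)) R) :
    aeval f g = (finSuccEquivLast R n g).eval₂
      (aeval (R := R) (f ∘ Fin.castSucc) : MvPolynomial (Fin n) R →+* S) (f (Fin.last n)) := by
  suffices aeval f = (Polynomial.aevalTower (aeval (f ∘ Fin.castSucc)) (f (Fin.last n))).comp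
      (finSuccEquivLast R n).toAlgHom from congrArg (· g) this
  refine algHom_ext fun i => ?_
  induction i using Fin.lastCases with
  | last => simp [finSuccEquivLast_X_last]
  | cast j => simp [finSuccEquivLast_X_castSucc]

end MvPolynomial

section

variable {k : Type*} [Field k]

theorem aeval_shear_injective {b α : k} (hα : α ≠ 0) :
    Function.Injective (aeval ![X 0 + C b * X 1, C α * X 1] :
      MvPolynomial (Fin 2) k →ₐ[k] MvPolynomial (Fin 2) k) := by
  refine Function.LeftInverse.injective (g := aeval ![X 0 - C (b / α) * X 1, C α⁻¹ * X 1])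
    fun p => ?_
  rw [← AlgHom.comp_apply, ← AlgHom.id_apply (R := k) p]
  congr 1
  refine algHom_ext fun i => ?_
  fin_cases i
  · simp [div_eq_mul_inv, C_mul]
    ring
  · simp [← mul_assoc, ← C_mul, hα]

theorem aeval_sq_shear_injective {b α : k} (hα : α ≠ 0) :
    Function.Injective (aeval ![X 0 ^ 2 + C b * X 1 ^ 2, C α * X 1 ^ 2] :
      MvPolynomial (Fin 2) k →ₐ[k] MvPolynomial (Fin 2) k) := by
  have hfactor : (aeval ![X 0 ^ 2 + C b * X 1 ^ 2, C α * X 1 ^ 2] :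
      MvPolynomial (Fin 2) k →ₐ[k] MvPolynomial (Fin 2) k) =
      (expand 2).comp (aeval ![X 0 + C b * X 1, C α * X 1]) := by
    refine algHom_ext fun i => ?_
    fin_cases i <;> simp
  rw [hfactor, AlgHom.coe_comp]
  exact (expand_injective two_pos).comp (aeval_shear_injective hα)

noncomputable def zImage (a c : k) : MvPolynomial (Fin 2) k :=
  (X 0 + C c * X 1) ^ 3 + C a * ((X 0 + C c * X 1) * X 1 ^ 3)

noncomputable def baseParam (c α : k) : MvPolynomial (Fin 2) k →ₐ[k] MvPolynomial (Fin 2) k :=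
  aeval ![X 0 ^ 2 + C (c ^ 2) * X 1 ^ 2, C α * X 1 ^ 2]

noncomputable def param (a c α : k) : MvPolynomial (Fin 3) k →ₐ[k] MvPolynomial (Fin 2) k :=
  aeval ![X 0 ^ 2 + C (c ^ 2) * X 1 ^ 2, C α * X 1 ^ 2, zImage a c]

theorem range_param {a c α : k} (hα : α ≠ 0) :
    (param a c α).range = Algebra.adjoin k {X 0 ^ 2, X 1 ^ 2, zImage a c} := by
  rw [param, ← Algebra.adjoin_range_eq_range_aeval, Matrix.range_cons, Matrix.range_cons,
    Matrix.range_cons, Matrix.range_empty, Set.union_empty, Set.singleton_union,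
    Set.singleton_union]
  set A := Algebra.adjoin k {X 0 ^ 2, X 1 ^ 2, zImage a c}
  set B := Algebra.adjoin k {X 0 ^ 2 + C (c ^ 2) * X 1 ^ 2, C α * X 1 ^ 2, zImage a c}
  have hxA : X 0 ^ 2 ∈ A := Algebra.subset_adjoin (by simp)
  have hyA : X 1 ^ 2 ∈ A := Algebra.subset_adjoin (by simp)
  have hsB : X 0 ^ 2 + C (c ^ 2) * X 1 ^ 2 ∈ B := Algebra.subset_adjoin (by simp)
  have hvB : C α * X 1 ^ 2 ∈ B := Algebra.subset_adjoin (by simp)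
  have hyB : X 1 ^ 2 ∈ B := by
    simpa [← mul_assoc, ← C_mul, hα] using B.mul_mem (B.algebraMap_mem α⁻¹) hvB
  refine le_antisymm (Algebra.adjoin_le ?_) (Algebra.adjoin_le ?_) <;>
    simp only [Set.insert_subset_iff, Set.singleton_subset_iff]
  · refine ⟨A.add_mem hxA (A.mul_mem (A.algebraMap_mem _) hyA),
      A.mul_mem (A.algebraMap_mem _) hyA, Algebra.subset_adjoin (by simp)⟩
  · refine ⟨?_, hyB, Algebra.subset_adjoin (by simp)⟩
    have := B.sub_mem hsB (B.mul_mem (B.algebraMap_mem (c ^ 2)) hyB)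
    rwa [algebraMap_eq, add_sub_cancel_right] at this

theorem param_eq_eval₂ (a c α : k) (g : MvPolynomial (Fin 3) k) :
    param a c α g = (finSuccEquivLast k 2 g).eval₂ (baseParam c α : _ →+* _) (zImage a c) := by
  have hinit : ![X 0 ^ 2 + C (c ^ 2) * X 1 ^ 2, C α * X 1 ^ 2, zImage a c] ∘ Fin.castSucc =
      ![X 0 ^ 2 + C (c ^ 2) * X 1 ^ 2, C α * X 1 ^ 2] := by
    funext i
    fin_cases i <;> rfl
  rw [param, aeval_eq_eval₂_finSuccEquivLast, hinit]
  rfl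

theorem finSuccEquivLast_relation :
    finSuccEquivLast k 2 (X 2 ^ 2 + X 0 ^ 3 + X 0 * X 1 ^ 3) =
      Polynomial.X ^ 2 + Polynomial.C (X 0 ^ 3 + X 0 * X 1 ^ 3) := by
  have h0 : finSuccEquivLast k 2 (X 0) = Polynomial.C (X 0) := finSuccEquivLast_X_castSucc 0
  have h1 : finSuccEquivLast k 2 (X 1) = Polynomial.C (X 1) := finSuccEquivLast_X_castSucc 1
  have h2 : finSuccEquivLast k 2 (X 2) = Polynomial.X := finSuccEquivLast_X_last
  simp only [map_add, map_pow, map_mul, h0, h1, h2, add_assoc]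

variable [CharP k 2]

theorem param_relation {a c α : k} (hα : α ^ 3 = a ^ 2) :
    param a c α (X 2 ^ 2 + X 0 ^ 3 + X 0 * X 1 ^ 3) = 0 := by
  have hq : X 0 ^ 2 + C c ^ 2 * X 1 ^ 2 = (X 0 + C c * X 1 : MvPolynomial (Fin 2) k) ^ 2 := by
    rw [CharTwo.add_sq, mul_pow]
  have h2 : (2 : MvPolynomial (Fin 2) k) = 0 := CharTwo.two_eq_zero
  have hα' : (C α : MvPolynomial (Fin 2) k) ^ 3 = C a ^ 2 := by rw [← map_pow, hα, map_pow]
  simp only [param, zImage, map_add, map_pow, map_mul, aeval_X, Matrix.cons_val,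
    Matrix.cons_val_zero, Matrix.cons_val_one]
  rw [hq]
  set q : MvPolynomial (Fin 2) k := X 0 + C c * X 1
  linear_combination (q ^ 6 + C a * q ^ 4 * X 1 ^ 3 + C a ^ 2 * q ^ 2 * X 1 ^ 6) * h2
    + q ^ 2 * X 1 ^ 6 * hα'

theorem pderiv_zero_zImage_ne_zero {a c : k} (ha : a ≠ 0) : pderiv 0 (zImage a c) ≠ 0 := by
  intro h
  -- at (c, 1) the form x + cy vanishes in characteristic 2, leaving ∂w/∂x = a
  have := congrArg (eval ![c, 1]) h
  simp [zImage, ← two_mul, CharTwo.two_eq_zero, ha] at this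

theorem ker_param {a c α : k} (ha : a ≠ 0) (hα0 : α ≠ 0) (hα : α ^ 3 = a ^ 2) :
    RingHom.ker (param a c α) = Ideal.span {X 2 ^ 2 + X 0 ^ 3 + X 0 * X 1 ^ 3} := by
  have hD : ∀ p, pderiv 0 (baseParam c α p) = 0 :=
    Derivation.map_aeval_eq_zero _ (by intro i; fin_cases i <;> simp [CharTwo.two_eq_zero])
  ext g
  rw [RingHom.mem_ker, Ideal.mem_span_singleton, ← map_dvd_iff (finSuccEquivLast k 2),
    param_eq_eval₂, finSuccEquivLast_relation]
  refine Polynomial.eval₂_eq_zero_iff_dvd_of_monic (Polynomial.monic_X_pow_add_C _ two_ne_zero)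
    ?_ (fun p hp => ?_) _
  · rw [← finSuccEquivLast_relation, ← param_eq_eval₂, param_relation hα]
  · rw [Polynomial.degree_X_pow_add_C two_pos] at hp
    exact Polynomial.eq_zero_of_eval₂_eq_zero_of_degree_lt_two (aeval_sq_shear_injective hα0)
      (pderiv 0) hD (pderiv_zero_zImage_ne_zero ha) hp

end

/-- For a ≠ 0 and arbitrary c,
k[x², y², (x+cy)³ + a(x+cy)y³] ≅ k[X,Y,Z]/(Z² + X³ + XY³). -/
theorem stmt_19 (k : Type*) [Field k] [IsAlgClosed k] [CharP k 2] (a c : k) (ha : a ≠ 0) :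
    Nonempty
      ((Algebra.adjoin k
          ({X 0 ^ 2, X 1 ^ 2,
            (X 0 + C c * X 1) ^ 3 + C a * ((X 0 + C c * X 1) * X 1 ^ 3)} :
            Set (MvPolynomial (Fin 2) k))) ≃ₐ[k]
        (MvPolynomial (Fin 3) k ⧸
          Ideal.span {(X 2 : MvPolynomial (Fin 3) k) ^ 2 + X 0 ^ 3 + X 0 * X 1 ^ 3})) := by
  obtain ⟨α, hα⟩ := IsAlgClosed.exists_pow_nat_eq (a ^ 2) (by norm_num : 0 < 3)
  have hα0 : α ≠ 0 := by
    rintro rfl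
    exact ha (pow_eq_zero_iff two_ne_zero |>.mp (by simpa using hα.symm))
  exact ⟨(Subalgebra.equivOfEq _ _ (range_param hα0).symm).trans
    ((Ideal.quotientKerEquivRange _).symm.trans
      (Ideal.quotientEquivAlgOfEq k (ker_param ha hα0 hα)))⟩
end
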